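/- arXiv:2012.01820 — 5 statements merged into one kernel-verified Lean document; each statement's English description precedes it below -/
import Mathlib

section
/- Let U ⊆ ℂⁿ be open and let N ⊆ U be a connected real-analytic submanifold, encoded by real-analytic functions ρ₁,…,ρ_r : U → ℝ whose real differentials Dρ₁(p),…,Dρ_r(p) are ℝ-linearly independent at every p ∈ U, with N = {z ∈ U : ρ₁(z) = ⋯ = ρ_r(z) = 0} and T_pN = ⋂_j ker Dρ_j(p). Let p ∈ N and let φ : U → ℂ^ν be holomorphic with φ(p) = 0 and with the complex derivative Dφ(z) of rank ν at every z ∈ U. Assume Z_φ and N are transverse at p as real submanifolds: the sum of ker Dφ(p) (viewed as a real subspace of ℂⁿ) and T_pN is all of ℂⁿ. Then for every open neighborhood W ⊆ U of p there exists ε > 0 such that every holomorphic ψ : W → ℂ^ν with ‖φ − ψ‖_W < ε vanishes at some point of N ∩ W. -/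
/-!
The map `H = (φ, ρ) : ℂⁿ → ℂ^ν × ℝ^r` vanishes at `p`, and its real derivative at `p` is onto:
`Dφ(p)` and `Dρ(p)` are onto separately, and transversality (`ker Dφ(p) + ker Dρ(p) = ℂⁿ`) makes
the pair onto. A zero of `ψ` on `N` solves `H(z) = (φ(z) - ψ(z), 0)`. On a small ball the right
side is uniformly small and, by the Schwarz lemma on complex lines, Lipschitz with a small
constant, since `φ - ψ` is holomorphic with sup norm `< ε`. The quantitative surjectivity of maps
that approximate a surjective linear map (the Newton-type step behind the inverse function
theorem) then produces a solution.
-/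

open Filter Topology Metric Set

theorem ContinuousLinearMap.range_pi_eq_top_of_linearIndependent {𝕜 E ι : Type*} [Field 𝕜]
    [TopologicalSpace 𝕜] [IsTopologicalRing 𝕜] [AddCommGroup E] [TopologicalSpace E] [Module 𝕜 E]
    [Finite ι] {f : ι → E →L[𝕜] 𝕜} (hf : LinearIndependent 𝕜 f) :
    (ContinuousLinearMap.pi f).range = ⊤ := by
  have hcoe : LinearIndependent 𝕜 fun i => ⇑(f i) :=
    hf.map' (LinearMap.ltoFun 𝕜 E 𝕜 𝕜 ∘ₗ ContinuousLinearMap.coeLM 𝕜)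
      (LinearMap.ker_eq_bot.2 fun _ _ h => DFunLike.coe_injective h)
  refine eq_top_iff.2 <| (span_flip_eq_top_iff_linearIndependent.2 hcoe).ge.trans <|
    Submodule.span_le.2 ?_
  rintro _ ⟨x, rfl⟩
  exact ⟨x, rfl⟩

section Holomorphic

variable {E F : Type*} [NormedAddCommGroup E] [NormedSpace ℂ E]
  [NormedAddCommGroup F] [NormedSpace ℂ F] {f : E → F}

theorem Complex.lipschitzOnWith_of_forall_norm_le {q : E} {s ε : ℝ}
    (hf : DifferentiableOn ℂ f (ball q (2 * s))) (hb : ∀ z ∈ ball q (2 * s), ‖f z‖ ≤ ε) :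
    LipschitzOnWith (2 * ε / s).toNNReal f (ball q (s / 2)) := by
  refine LipschitzOnWith.of_dist_le' fun z hz w hw => ?_
  rcases eq_or_ne z w with rfl | hne
  · simp
  have hzw : 0 < ‖z - w‖ := norm_pos_iff.2 (sub_ne_zero.2 hne)
  have hzw_lt : ‖z - w‖ < s := by
    rw [← dist_eq_norm]
    linarith [dist_triangle_right z w q, mem_ball.1 hz, mem_ball.1 hw]
  -- one-variable Schwarz lemma on the complex line through `w` and `z`
  set R := s / ‖z - w‖
  have hR : 0 < R := div_pos (hzw.trans hzw_lt) hzw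
  set g : ℂ → F := fun t => f (w + t • (z - w))
  have hline : MapsTo (fun t : ℂ => w + t • (z - w)) (ball 0 R) (ball q (2 * s)) := by
    intro t ht
    rw [mem_ball_zero_iff, lt_div_iff₀ hzw] at ht
    rw [mem_ball, dist_eq_norm, add_sub_right_comm]
    calc ‖w - q + t • (z - w)‖ ≤ ‖w - q‖ + ‖t‖ * ‖z - w‖ :=
          (norm_add_le _ _).trans_eq (by rw [norm_smul])
      _ < s / 2 + s := add_lt_add (by rw [← dist_eq_norm]; exact mem_ball.1 hw) ht
      _ < 2 * s := by linarith
  have hg : DifferentiableOn ℂ g (ball 0 R) := hf.comp (by fun_prop) hline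
  have hmaps : MapsTo g (ball 0 R) (closedBall (g 0) (2 * ε)) := by
    intro t ht
    rw [mem_closedBall, dist_eq_norm]
    have h0 : (0 : ℂ) ∈ ball 0 R := mem_ball_self hR
    linarith [norm_sub_le (g t) (g 0), hb _ (hline ht), hb _ (hline h0)]
  have h1 : (1 : ℂ) ∈ ball 0 R := by
    rw [mem_ball_zero_iff, norm_one, one_lt_div hzw]
    exact hzw_lt
  calc dist (f z) (f w) = dist (g 1) (g 0) := by simp [g]
    _ ≤ 2 * ε / R * dist (1 : ℂ) 0 := Complex.dist_le_div_mul_dist_of_mapsTo_ball hg hmaps h1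
    _ = 2 * ε / s * dist z w := by
      rw [dist_eq_norm z w, dist_zero_right, norm_one, mul_one, div_div_eq_mul_div]
      ring

theorem DifferentiableOn.approximatesLinearOn_fderiv {s : Set E} {x : E}
    (hf : DifferentiableOn ℂ f s) (hs : s ∈ 𝓝 x) {c : NNReal} (hc : 0 < c) :
    ∃ t ∈ 𝓝 x, ApproximatesLinearOn f (fderiv ℂ f x) t c := by
  set f' := fderiv ℂ f x
  -- the remainder is holomorphic and `o(‖z - x‖)`, so it is `c`-Lipschitz on small balls
  set χ : E → F := fun z => f z - f x - f' (z - x)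
  obtain ⟨δ, hδ, hball⟩ := Metric.mem_nhds_iff.1 <| inter_mem hs <|
    (hf.differentiableAt hs).hasFDerivAt.isLittleO.bound (by positivity : (0 : ℝ) < c / 4)
  have hχ : DifferentiableOn ℂ χ (ball x (2 * (δ / 2))) := by
    rw [mul_div_cancel₀ _ two_ne_zero]
    exact ((hf.mono fun z hz => (hball hz).1).sub_const _).sub (by fun_prop)
  have hχ_le : ∀ z ∈ ball x (2 * (δ / 2)), ‖χ z‖ ≤ c / 4 * δ := by
    rw [mul_div_cancel₀ _ two_ne_zero]
    intro z hz
    calc ‖χ z‖ ≤ c / 4 * ‖z - x‖ := (hball hz).2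
      _ ≤ c / 4 * δ := by gcongr; exact (mem_ball_iff_norm.1 hz).le
  refine ⟨ball x (δ / 2 / 2), ball_mem_nhds _ (by positivity), fun z hz w hw => ?_⟩
  have hlip := Complex.lipschitzOnWith_of_forall_norm_le hχ hχ_le
  have hconst : (2 * (c / 4 * δ) / (δ / 2)).toNNReal = c := by
    rw [show 2 * (c / 4 * δ) / (δ / 2) = c by field_simp; ring, Real.toNNReal_coe]
  rw [hconst, lipschitzOnWith_iff_norm_sub_le] at hlip
  calc ‖f z - f w - f' (z - w)‖ = ‖χ z - χ w‖ := by simp only [χ, map_sub]; abel_nf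
    _ ≤ c * ‖z - w‖ := hlip hz hw

theorem DifferentiableOn.hasStrictFDerivAt {s : Set E} {x : E}
    (hf : DifferentiableOn ℂ f s) (hs : s ∈ 𝓝 x) : HasStrictFDerivAt f (fderiv ℂ f x) x := by
  refine .of_isLittleO <| Asymptotics.isLittleO_iff.2 fun c hc => ?_
  obtain ⟨t, ht, hft⟩ := hf.approximatesLinearOn_fderiv hs (Real.toNNReal_pos.2 hc)
  filter_upwards [prod_mem_nhds ht ht] with y hy
  simpa [Real.coe_toNNReal _ hc.le] using hft _ hy.1 _ hy.2

end Holomorphic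

theorem ApproximatesLinearOn.exists_mem_closedBall_eq_of_lipschitzOnWith
    {E F : Type*} [NormedAddCommGroup E] [NormedSpace ℝ E] [CompleteSpace E]
    [NormedAddCommGroup F] [NormedSpace ℝ F] {H g : E → F} {D : E →L[ℝ] F}
    {c k : NNReal} {p : E} {R : ℝ} (hH : ApproximatesLinearOn H D (closedBall p R) c)
    (hg : LipschitzOnWith k g (closedBall p R)) (Dsymm : D.NonlinearRightInverse) (hR : 0 ≤ R)
    (hsmall : ‖H p - g p‖ ≤ ((Dsymm.nnnorm : ℝ)⁻¹ - c - k) * R) :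
    ∃ z ∈ closedBall p R, H z = g z := by
  have hHg : ApproximatesLinearOn (H - g) D (closedBall p R) (c + k) := by
    refine LipschitzOnWith.approximatesLinearOn ?_
    have hsub : H - g - ⇑D = fun z => (H - ⇑D) z - g z := by
      funext z
      simp only [Pi.sub_apply]
      abel
    rw [hsub]
    exact hH.lipschitzOnWith.sub hg
  obtain ⟨z, hz, hzero⟩ := hHg.surjOn_closedBall_of_nonlinearRightInverse Dsymm hR subset_rfl
    (show (0 : F) ∈ _ by
      rw [mem_closedBall, dist_zero_left, NNReal.coe_add, ← sub_sub]
      exact hsmall)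
  exact ⟨z, hz, sub_eq_zero.1 hzero⟩

section Perturbation

variable {E G F : Type*} [NormedAddCommGroup E] [NormedSpace ℂ E] [CompleteSpace E]
  [NormedAddCommGroup G] [NormedSpace ℂ G] [CompleteSpace G]
  [NormedAddCommGroup F] [NormedSpace ℝ F] [CompleteSpace F]

theorem HasStrictFDerivAt.exists_common_zero_of_forall_norm_sub_lt {φ : E → G} {ρ : E → F}
    {D : E →L[ℝ] G × F} {p : E} {W : Set E}
    (hD : HasStrictFDerivAt (fun z => (φ z, ρ z)) D p) (hsurj : D.range = ⊤)
    (hφ : DifferentiableOn ℂ φ W) (hW : W ∈ 𝓝 p) (hφp : φ p = 0) (hρp : ρ p = 0) :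
    ∃ ε > (0 : ℝ), ∀ ψ : E → G, DifferentiableOn ℂ ψ W →
      (∀ z ∈ W, ‖φ z - ψ z‖ < ε) → ∃ z ∈ W, ψ z = 0 ∧ ρ z = 0 := by
  set Dsymm := D.nonlinearRightInverseOfSurjective hsurj
  set K : ℝ := (Dsymm.nnnorm : ℝ)⁻¹
  have hK : 0 < K := inv_pos.2 (D.nonlinearRightInverseOfSurjective_nnnorm_pos hsurj)
  obtain ⟨s, hs, hHs⟩ := hD.approximates_deriv_on_nhds (c := (K / 2).toNNReal)
    (Or.inr (Real.toNNReal_pos.2 (half_pos hK)))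
  obtain ⟨δ, hδ, hball⟩ := Metric.mem_nhds_iff.1 (inter_mem hs hW)
  obtain ⟨R, hR, rfl⟩ : ∃ R, 0 < R ∧ δ = 2 * (4 * R) := ⟨δ / 8, by positivity, by ring⟩
  have hRs : closedBall p R ⊆ ball p (4 * R / 2) := closedBall_subset_ball (by linarith)
  have hRδ : closedBall p R ⊆ ball p (2 * (4 * R)) := hRs.trans (ball_subset_ball (by linarith))
  have hRW : ball p (2 * (4 * R)) ⊆ W := fun z hz => (hball hz).2
  have hHR := hHs.mono_set fun z hz => (hball (hRδ hz)).1
  refine ⟨K * R / 4, by positivity, fun ψ hψ hψε => ?_⟩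
  have hχ := Complex.lipschitzOnWith_of_forall_norm_le ((hφ.sub hψ).mono hRW)
    fun z hz => (hψε z (hRW hz)).le
  have hg := (hχ.mono hRs).prodMk (LipschitzWith.const (0 : F)).lipschitzOnWith
  have hsmall : ‖(φ p, ρ p) - ((φ - ψ) p, (0 : F))‖ ≤
      (K - (K / 2).toNNReal - max (2 * (K * R / 4) / (4 * R)).toNNReal 0) * R := by
    have hψp := hψε p (mem_of_mem_nhds hW)
    simp only [hφp, hρp, Pi.sub_apply, zero_sub, Prod.mk_sub_mk, sub_zero, norm_neg, neg_neg,
      Prod.norm_mk, norm_zero, max_eq_left (norm_nonneg _), NNReal.coe_max, NNReal.coe_zero]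
      at hψp ⊢
    rw [Real.coe_toNNReal _ (by positivity), Real.coe_toNNReal _ (by positivity),
      max_eq_left (by positivity)]
    calc ‖ψ p‖ ≤ K * R / 4 := hψp.le
      _ ≤ (K - K / 2 - 2 * (K * R / 4) / (4 * R)) * R := by field_simp; nlinarith
  obtain ⟨z, hz, hHz⟩ :=
    hHR.exists_mem_closedBall_eq_of_lipschitzOnWith hg Dsymm hR.le hsmall
  simp only [Prod.mk.injEq, Pi.sub_apply] at hHz
  exact ⟨z, hRW (hRδ hz), sub_eq_self.1 hHz.1.symm, hHz.2⟩

end Perturbation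

theorem zeros_cannot_be_perturbed_away_transversal_general {n ν r : ℕ}
    (U : Set (Fin n → ℂ)) (hU : IsOpen U)
    (ρ : Fin r → (Fin n → ℂ) → ℝ)
    (hρa : ∀ j, AnalyticOn ℝ (ρ j) U)
    (hind : ∀ p ∈ U, LinearIndependent ℝ (fun j => fderiv ℝ (ρ j) p))
    (N : Set (Fin n → ℂ)) (hN : N = {z | z ∈ U ∧ ∀ j, ρ j z = 0})
    (p : Fin n → ℂ) (hp : p ∈ N)
    (φ : (Fin n → ℂ) → (Fin ν → ℂ)) (hφ : DifferentiableOn ℂ φ U) (hφp : φ p = 0)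
    (hrank : ∀ z ∈ U,
      Module.finrank ℂ (LinearMap.range ((fderiv ℂ φ z).toLinearMap)) = ν)
    -- transversality: `ker Dφ(p) + T_pN = ℂⁿ` as real subspaces
    (htrans : ∀ x : Fin n → ℂ, ∃ u v : Fin n → ℂ,
      fderiv ℂ φ p u = 0 ∧ (∀ j, fderiv ℝ (ρ j) p v = 0) ∧ x = u + v) :
    ∀ W : Set (Fin n → ℂ), IsOpen W → p ∈ W → W ⊆ U →
      ∃ ε > (0 : ℝ), ∀ ψ : (Fin n → ℂ) → (Fin ν → ℂ), DifferentiableOn ℂ ψ W →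
        (∀ z ∈ W, ‖φ z - ψ z‖ < ε) → ∃ z ∈ N ∩ W, ψ z = 0 := by
  intro W hW hpW hWU
  subst hN
  obtain ⟨hpU, hρp⟩ := hp
  set Dφ := (fderiv ℂ φ p).restrictScalars ℝ
  set Dρ := ContinuousLinearMap.pi fun j => fderiv ℝ (ρ j) p
  have hDφ : HasStrictFDerivAt φ Dφ p :=
    (hφ.hasStrictFDerivAt (hU.mem_nhds hpU)).restrictScalars ℝ
  have hDρ : HasStrictFDerivAt (fun z j => ρ j z) Dρ p :=
    hasStrictFDerivAt_pi.2 fun j => ((hρa j).analyticAt (hU.mem_nhds hpU)).hasStrictFDerivAt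
  have hDφ_surj : Dφ.range = ⊤ := by
    have : LinearMap.range (fderiv ℂ φ p).toLinearMap = ⊤ :=
      Submodule.eq_top_of_finrank_eq (by rw [hrank p hpU, Module.finrank_fin_fun])
    exact LinearMap.range_eq_top.2 (LinearMap.range_eq_top.1 this :)
  have hker : Dφ.ker ⊔ Dρ.ker = ⊤ := by
    refine eq_top_iff.2 fun x _ => ?_
    obtain ⟨u, v, hu, hv, rfl⟩ := htrans x
    exact Submodule.add_mem_sup hu (by ext j; exact hv j)
  have hsurj : (Dφ.prod Dρ).range = ⊤ := by
    rw [ContinuousLinearMap.range_prod_eq hker, hDφ_surj,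
      ContinuousLinearMap.range_pi_eq_top_of_linearIndependent (hind p hpU), Submodule.prod_top]
  obtain ⟨ε, hε, hzero⟩ := (hDφ.prodMk hDρ).exists_common_zero_of_forall_norm_sub_lt hsurj
    (hφ.mono hWU) (hW.mem_nhds hpW) hφp (funext hρp)
  refine ⟨ε, hε, fun ψ hψ hψε => ?_⟩
  obtain ⟨z, hzW, hψz, hρz⟩ := hzero ψ hψ hψε
  exact ⟨z, ⟨⟨hWU hzW, congrFun hρz⟩, hzW⟩, hψz⟩

/-- If `Z_φ` (with `Dφ` of full rank `ν`) and `N` are transverse at `p` as real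
submanifolds, then the zero of `φ` on `N` cannot be perturbed away. -/
theorem zeros_cannot_be_perturbed_away_transversal {n ν r : ℕ}
    (U : Set (Fin n → ℂ)) (hU : IsOpen U)
    (ρ : Fin r → (Fin n → ℂ) → ℝ)
    (hρa : ∀ j, AnalyticOn ℝ (ρ j) U)
    (hind : ∀ p ∈ U, LinearIndependent ℝ (fun j => fderiv ℝ (ρ j) p))
    (N : Set (Fin n → ℂ)) (hN : N = {z | z ∈ U ∧ ∀ j, ρ j z = 0})
    (hNconn : IsConnected N)
    (p : Fin n → ℂ) (hp : p ∈ N)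
    (φ : (Fin n → ℂ) → (Fin ν → ℂ)) (hφ : DifferentiableOn ℂ φ U) (hφp : φ p = 0)
    (hrank : ∀ z ∈ U,
      Module.finrank ℂ (LinearMap.range ((fderiv ℂ φ z).toLinearMap)) = ν)
    -- transversality: `ker Dφ(p) + T_pN = ℂⁿ` as real subspaces
    (htrans : ∀ x : Fin n → ℂ, ∃ u v : Fin n → ℂ,
      fderiv ℂ φ p u = 0 ∧ (∀ j, fderiv ℝ (ρ j) p v = 0) ∧ x = u + v) :
    ∀ W : Set (Fin n → ℂ), IsOpen W → p ∈ W → W ⊆ U →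
      ∃ ε > (0 : ℝ), ∀ ψ : (Fin n → ℂ) → (Fin ν → ℂ), DifferentiableOn ℂ ψ W →
        (∀ z ∈ W, ‖φ z - ψ z‖ < ε) → ∃ z ∈ N ∩ W, ψ z = 0 :=
  zeros_cannot_be_perturbed_away_transversal_general U hU ρ hρa hind N hN p hp φ hφ hφp hrank htrans
end

section
/- Let ℓ ≥ 1 and let N ⊆ ℂⁿ be a connected real-analytic generic submanifold of codimension 2ℓ or 2ℓ + 1 encoded by defining functions on an open set U. Let F : U → ℂⁿ be holomorphic such that F restricted to N is a diffeomorphism onto its image (encoded: F injective on N, DF(q) injective on T_qN for all q ∈ N) and DF is generically of rank n on U. Consider the map F ⊕ 0 : U → ℂⁿ × ℂ^ℓ, z ↦ (F(z), 0). Then for every p ∈ N there exists an open neighborhood W ⊆ U of p such that for every ε > 0 there is a holomorphic map G : W → ℂⁿ × ℂ^ℓ with ‖G − (F ⊕ 0)‖_W < ε, G injective on N ∩ W, DG(q) injective on T_qN for every q ∈ N ∩ W, and rank DG(q) = n for every q ∈ N ∩ W. In other words, G(N ∩ W) is a CR submanifold. -/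
/-!
Since `T_pN` has real codimension `k ≤ 2ℓ + 1` in `ℂⁿ` and `DF(p)` is injective on it, the complex
kernel of `DF(p)` has dimension at most `ℓ`; hence some linear `L : ℂⁿ → ℂˡ` makes `(DF(p), L)`
injective. As `DF` is continuous, `(DF(q), L)` stays injective for `q` near `p`, and
`G = (F, c • L (· - p))` with `c` small is uniformly close to `F ⊕ 0` there, has injective
differential, and is injective on `N` because its first component `F` is.
-/

open Complex Filter Topology Metric
open scoped ComplexConjugate

noncomputable section

/-- Wirtinger derivative `∂ρ/∂z_l` at `p` of a real-valued function,
via the real Fréchet derivative. -/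
def wirt {n : ℕ} (ρ : (Fin n → ℂ) → ℝ) (p : Fin n → ℂ) (l : Fin n) : ℂ :=
  (1/2 : ℂ) * ((fderiv ℝ ρ p (Pi.single l 1 : Fin n → ℂ) : ℂ) -
     Complex.I * (fderiv ℝ ρ p (Complex.I • (Pi.single l 1 : Fin n → ℂ)) : ℂ))

/-- The real tangent space `T_qN = ⋂ⱼ ker Dρⱼ(q)`, as a real subspace of `ℂⁿ`. -/
def tSub {n k : ℕ} (ρ : Fin k → (Fin n → ℂ) → ℝ) (q : Fin n → ℂ) :
    Submodule ℝ (Fin n → ℂ) :=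
  ⨅ j, LinearMap.ker (fderiv ℝ (ρ j) q).toLinearMap

theorem finrank_le_finrank_iInf_ker_add_card {K V ι : Type*} [Field K] [AddCommGroup V]
    [Module K V] [FiniteDimensional K V] [Fintype ι] (f : ι → V →ₗ[K] K) :
    Module.finrank K V ≤ Module.finrank K ↥(⨅ i, LinearMap.ker (f i)) + Fintype.card ι := by
  rw [← LinearMap.ker_pi, ← LinearMap.finrank_range_add_finrank_ker (LinearMap.pi f), add_comm]
  gcongr
  simpa using Submodule.finrank_le (LinearMap.range (LinearMap.pi f))

theorem two_mul_finrank_ker_add_finrank_le_of_injOn {V E : Type*} [AddCommGroup V]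
    [Module ℂ V] [FiniteDimensional ℂ V] [AddCommGroup E] [Module ℂ E] (D : V →ₗ[ℂ] E)
    (T : Submodule ℝ V) (hD : Set.InjOn D T) :
    2 * Module.finrank ℂ (LinearMap.ker D) + Module.finrank ℝ T ≤ Module.finrank ℝ V := by
  have hdisj : Disjoint ((LinearMap.ker D).restrictScalars ℝ) T := by
    rw [Submodule.disjoint_def]
    intro x hxK hxT
    exact hD hxT T.zero_mem (by simpa using hxK)
  rw [← finrank_real_of_complex]
  exact Submodule.finrank_add_finrank_le_of_disjoint hdisj

theorem two_mul_finrank_ker_le_of_injOn_iInf_ker {V E ι : Type*} [AddCommGroup V]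
    [Module ℂ V] [FiniteDimensional ℂ V] [AddCommGroup E] [Module ℂ E] [Fintype ι]
    (D : V →ₗ[ℂ] E) (f : ι → V →ₗ[ℝ] ℝ)
    (hD : Set.InjOn D (⨅ i, LinearMap.ker (f i) : Submodule ℝ V)) :
    2 * Module.finrank ℂ (LinearMap.ker D) ≤ Fintype.card ι := by
  have := two_mul_finrank_ker_add_finrank_le_of_injOn D _ hD
  have := finrank_le_finrank_iInf_ker_add_card f
  omega

theorem Submodule.exists_linearMap_disjoint_ker {K V W : Type*} [Field K] [AddCommGroup V]
    [Module K V] [AddCommGroup W] [Module K W] [FiniteDimensional K W] (P : Submodule K V)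
    [FiniteDimensional K P] (h : Module.finrank K P ≤ Module.finrank K W) :
    ∃ L : V →ₗ[K] W, Disjoint P (LinearMap.ker L) := by
  let b := Module.finBasis K P
  let c := Module.finBasis K W
  have hf : Function.Injective (b.constr K (c ∘ Fin.castLE h)) :=
    b.injective_constr_of_linearIndependent (c.linearIndependent.comp _ (Fin.castLE_injective h))
  obtain ⟨L, hL⟩ := LinearMap.exists_extend (b.constr K (c ∘ Fin.castLE h))
  refine ⟨L, Submodule.disjoint_def.2 fun x hxP hxL => ?_⟩
  have : b.constr K (c ∘ Fin.castLE h) ⟨x, hxP⟩ = 0 := by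
    rw [← hL]; exact hxL
  simpa using hf (this.trans (map_zero _).symm)

theorem ContinuousAt.eventually_injective {𝕜 V E X : Type*} [NontriviallyNormedField 𝕜]
    [CompleteSpace 𝕜] [NormedAddCommGroup V] [NormedSpace 𝕜 V] [FiniteDimensional 𝕜 V]
    [NormedAddCommGroup E] [NormedSpace 𝕜 E] [TopologicalSpace X] {A : X → V →L[𝕜] E} {x : X}
    (hA : ContinuousAt A x) (hx : Function.Injective (A x)) :
    ∀ᶠ y in 𝓝 x, Function.Injective (A y) := by
  let b := Module.finBasis 𝕜 V
  have hb : ContinuousAt (fun y i => A y (b i)) x :=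
    continuousAt_pi.2 fun i => (ContinuousLinearMap.apply 𝕜 E (b i)).continuous.continuousAt.comp hA
  have hli : LinearIndependent 𝕜 (fun i => A x (b i)) :=
    b.linearIndependent.map' (A x : V →ₗ[𝕜] E) (LinearMap.ker_eq_bot.2 hx)
  filter_upwards [hb.eventually hli.eventually] with y hy
  exact LinearMap.injective_of_linearIndependent (f := (A y : V →ₗ[𝕜] E)) b.span_eq hy

section Holomorphic

variable {V E : Type*} [NormedAddCommGroup V] [NormedSpace ℂ V] [NormedAddCommGroup E]
  [NormedSpace ℂ E] [CompleteSpace E] {U : Set V} {F : V → E}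

theorem fderiv_apply_eq_cderiv (hU : IsOpen U) (hF : DifferentiableOn ℂ F U) {z v : V} {r : ℝ}
    (hr : 0 < r) (hzr : ∀ w ∈ closedBall (0 : ℂ) r, z + w • v ∈ U) :
    fderiv ℂ F z v = cderiv r (fun w : ℂ => F (z + w • v)) 0 := by
  let line : ℂ → V := fun w => z + w • v
  have hline : ∀ w, HasDerivAt line v w := fun w => by
    simpa [line] using ((hasDerivAt_id w).smul_const v).const_add z
  have hdiff : DifferentiableOn ℂ (F ∘ line) (line ⁻¹' U) :=
    hF.comp (fun w _ => (hline w).differentiableAt.differentiableWithinAt) (Set.mapsTo_preimage _ _)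
  change _ = cderiv r (F ∘ line) 0
  rw [cderiv_eq_deriv (hU.preimage (by fun_prop)) hdiff hr hzr]
  have hz : z ∈ U := by simpa using hzr 0 (mem_closedBall_self hr.le)
  exact (((hF.differentiableAt (hU.mem_nhds hz)).hasFDerivAt.comp_hasDerivAt_of_eq 0 (hline 0)
    (by simp [line])).deriv).symm

theorem DifferentiableOn.continuousOn_fderiv_apply [ProperSpace V]
    (hF : DifferentiableOn ℂ F U) (hU : IsOpen U) (v : V) :
    ContinuousOn (fun z => fderiv ℂ F z v) U := by
  -- `DF(z) v` is a Cauchy integral over a circle in the complex line `z + ℂ v`, and such integrals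
  -- depend uniformly continuously on the integrand.
  intro a ha
  refine (Metric.continuousAt_iff.2 fun ε hε => ?_).continuousWithinAt
  obtain ⟨t, ht, htU⟩ := nhds_basis_closedBall.mem_iff.1 (hU.mem_nhds ha)
  set r := t / (2 * (‖v‖ + 1))
  have hr : 0 < r := by positivity
  have hrv : r * ‖v‖ ≤ t / 2 := calc
    r * ‖v‖ ≤ r * (‖v‖ + 1) := by gcongr; linarith
    _ = t / 2 := by simp only [r]; field_simp
  have hmem : ∀ z ∈ ball a (t / 2), ∀ w ∈ closedBall (0 : ℂ) r, z + w • v ∈ closedBall a t := by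
    intro z hz w hw
    rw [mem_closedBall_zero_iff] at hw
    rw [mem_ball_iff_norm] at hz
    rw [mem_closedBall_iff_norm]
    calc ‖z + w • v - a‖ = ‖(z - a) + w • v‖ := by rw [add_sub_right_comm]
      _ ≤ ‖z - a‖ + ‖w‖ * ‖v‖ := by rw [← norm_smul]; exact norm_add_le _ _
      _ ≤ t := by nlinarith [norm_nonneg v]
  have hcont : ∀ z ∈ ball a (t / 2), ContinuousOn (fun w : ℂ => F (z + w • v)) (sphere 0 r) :=
    fun z hz => (hF.continuousOn.mono htU).comp (by fun_prop)
      fun w hw => hmem z hz w (sphere_subset_closedBall hw)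
  obtain ⟨δ, hδ, hFδ⟩ := Metric.uniformContinuousOn_iff.1
    ((isCompact_closedBall a t).uniformContinuousOn_of_continuous (hF.continuousOn.mono htU))
    (ε * r) (by positivity)
  refine ⟨min δ (t / 2), by positivity, fun {z} hz => ?_⟩
  have hzt : z ∈ ball a (t / 2) := lt_of_lt_of_le hz (min_le_right _ _)
  have hat : a ∈ ball a (t / 2) := mem_ball_self (by positivity)
  rw [dist_eq_norm, fderiv_apply_eq_cderiv hU hF hr fun w hw => htU (hmem z hzt w hw),
    fderiv_apply_eq_cderiv hU hF hr fun w hw => htU (hmem a hat w hw)]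
  refine (norm_cderiv_sub_lt (M := ε * r) hr (fun w hw => ?_) (hcont z hzt) (hcont a hat)).trans_eq
    (by field_simp)
  rw [← dist_eq_norm]
  refine hFδ _ (hmem z hzt w (sphere_subset_closedBall hw)) _
    (hmem a hat w (sphere_subset_closedBall hw)) ?_
  rw [dist_add_right]
  exact lt_of_lt_of_le hz (min_le_left _ _)

theorem DifferentiableOn.continuousOn_fderiv [FiniteDimensional ℂ V]
    (hF : DifferentiableOn ℂ F U) (hU : IsOpen U) : ContinuousOn (fderiv ℂ F) U :=
  continuousOn_clm_apply.2 (hF.continuousOn_fderiv_apply hU)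

end Holomorphic

section Perturbation

variable {V E E' : Type*} [NormedAddCommGroup V] [NormedSpace ℂ V] [NormedAddCommGroup E]
  [NormedSpace ℂ E] [NormedAddCommGroup E'] [NormedSpace ℂ E']

theorem ContinuousLinearMap.injective_prod_smul_right {A : V →L[ℂ] E} {L : V →L[ℂ] E'}
    (h : Function.Injective (A.prod L)) {c : ℂ} (hc : c ≠ 0) :
    Function.Injective (A.prod (c • L)) := by
  intro x y hxy
  simp only [ContinuousLinearMap.prod_apply, Prod.mk.injEq, smul_apply] at hxy
  exact h (Prod.ext hxy.1 (smul_right_injective E' hc hxy.2))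

theorem exists_isOpen_forall_injective_fderiv_prod [FiniteDimensional ℂ V] [CompleteSpace E]
    {U : Set V} {F : V → E} (hU : IsOpen U) (hF : DifferentiableOn ℂ F U) {p : V} (hp : p ∈ U)
    {L : V →L[ℂ] E'} (hL : Function.Injective ((fderiv ℂ F p).prod L)) :
    ∃ W, IsOpen W ∧ p ∈ W ∧ W ⊆ U ∩ ball p 1 ∧
      ∀ q ∈ W, Function.Injective ((fderiv ℂ F q).prod L) := by
  have hcont : ContinuousAt (fun q => (fderiv ℂ F q).prod L) p :=
    (ContinuousLinearMap.prodₗᵢ ℂ).continuous.continuousAt.comp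
      (((hF.continuousOn_fderiv hU).continuousAt (hU.mem_nhds hp)).prodMk continuousAt_const)
  obtain ⟨W, hW, hWo, hpW⟩ := _root_.eventually_nhds_iff.1 ((hU.eventually_mem hp).and
    ((isOpen_ball.eventually_mem (mem_ball_self one_pos)).and (hcont.eventually_injective hL)))
  exact ⟨W, hWo, hpW, fun q hq => ⟨(hW q hq).1, (hW q hq).2.1⟩, fun q hq => (hW q hq).2.2⟩

theorem exists_perturbation_injective_fderiv [FiniteDimensional ℂ V] [CompleteSpace E]
    {U : Set V} {F : V → E} (hU : IsOpen U) (hF : DifferentiableOn ℂ F U) {p : V} (hp : p ∈ U)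
    {L : V →L[ℂ] E'} (hL : Function.Injective ((fderiv ℂ F p).prod L)) :
    ∃ W, IsOpen W ∧ p ∈ W ∧ W ⊆ U ∧ ∀ ε > (0 : ℝ), ∃ G : V → E × E',
      DifferentiableOn ℂ G W ∧ (∀ z ∈ W, ‖G z - (F z, 0)‖ < ε) ∧ (∀ z, (G z).1 = F z) ∧
      ∀ q ∈ W, Function.Injective (fderiv ℂ G q) := by
  obtain ⟨W, hWo, hpW, hWU, hWinj⟩ := exists_isOpen_forall_injective_fderiv_prod hU hF hp hL
  refine ⟨W, hWo, hpW, fun q hq => (hWU hq).1, fun ε hε => ?_⟩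
  set c : ℝ := ε / (‖L‖ + 1)
  have hc : 0 < c := by positivity
  have hG : ∀ q ∈ W, HasFDerivAt (fun z => (F z, (c : ℂ) • L (z - p)))
      ((fderiv ℂ F q).prod ((c : ℂ) • L)) q := fun q hq =>
    (hF.differentiableAt (hU.mem_nhds (hWU hq).1)).hasFDerivAt.prodMk
      ((((c : ℂ) • L).hasFDerivAt.comp q ((hasFDerivAt_id q).sub_const p)).congr_fderiv (by simp))
  refine ⟨fun z => (F z, (c : ℂ) • L (z - p)), fun q hq => (hG q hq).differentiableAt
    |>.differentiableWithinAt, fun z hz => ?_, fun z => rfl, fun q hq => ?_⟩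
  · have hzp : ‖z - p‖ < 1 := mem_ball_iff_norm.1 (hWU hz).2
    calc ‖(F z, (c : ℂ) • L (z - p)) - (F z, 0)‖ = c * ‖L (z - p)‖ := by
          simp [Prod.norm_def, norm_smul, abs_of_pos hc]; positivity
      _ ≤ c * (‖L‖ * 1) := by gcongr; exact (L.le_opNorm _).trans (by gcongr)
      _ < c * (‖L‖ + 1) := by gcongr; linarith
      _ = ε := by simp only [c]; field_simp
  · rw [(hG q hq).fderiv]
    exact ContinuousLinearMap.injective_prod_smul_right (hWinj q hq) (by exact_mod_cast hc.ne')

end Perturbation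

theorem perturb_away_after_adding_dimensions_general {n k ℓ : ℕ}
    (hk : k = 2 * ℓ ∨ k = 2 * ℓ + 1)
    (U : Set (Fin n → ℂ)) (hU : IsOpen U)
    (ρ : Fin k → (Fin n → ℂ) → ℝ)
    (N : Set (Fin n → ℂ)) (hN : N = {z | z ∈ U ∧ ∀ j, ρ j z = 0})
    (F : (Fin n → ℂ) → (Fin n → ℂ)) (hF : DifferentiableOn ℂ F U)
    (hFinj : Set.InjOn F N)
    (hFdinj : ∀ q ∈ N, Set.InjOn (fderiv ℂ F q) (tSub ρ q : Set (Fin n → ℂ))) :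
    ∀ p ∈ N, ∃ W : Set (Fin n → ℂ), IsOpen W ∧ p ∈ W ∧ W ⊆ U ∧
      ∀ ε > (0 : ℝ), ∃ G : (Fin n → ℂ) → (Fin n → ℂ) × (Fin ℓ → ℂ),
        DifferentiableOn ℂ G W ∧
        (∀ z ∈ W, ‖G z - (F z, (0 : Fin ℓ → ℂ))‖ < ε) ∧
        Set.InjOn G (N ∩ W) ∧
        (∀ q ∈ N ∩ W, Set.InjOn (fderiv ℂ G q) (tSub ρ q : Set (Fin n → ℂ))) ∧
        (∀ q ∈ N ∩ W,
          Module.finrank ℂ (LinearMap.range ((fderiv ℂ G q).toLinearMap)) = n) := by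
  intro p hp
  have hpU : p ∈ U := (hN ▸ hp).1
  have hker : Module.finrank ℂ (LinearMap.ker (fderiv ℂ F p).toLinearMap) ≤
      Module.finrank ℂ (Fin ℓ → ℂ) := by
    have hdim := two_mul_finrank_ker_le_of_injOn_iInf_ker _ _ (hFdinj p hp)
    rw [Fintype.card_fin] at hdim
    rw [Module.finrank_fin_fun]
    omega
  obtain ⟨L, hL⟩ := Submodule.exists_linearMap_disjoint_ker _ hker
  have hprod : Function.Injective ((fderiv ℂ F p).prod L.toContinuousLinearMap) := by
    rw [← ContinuousLinearMap.coe_coe, ← LinearMap.ker_eq_bot, ContinuousLinearMap.coe_prod,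
      LinearMap.ker_prod]
    exact hL.eq_bot
  obtain ⟨W, hWo, hpW, hWU, hG⟩ := exists_perturbation_injective_fderiv hU hF hpU hprod
  refine ⟨W, hWo, hpW, hWU, fun ε hε => ?_⟩
  obtain ⟨G, hGd, hGε, hGF, hGinj⟩ := hG ε hε
  refine ⟨G, hGd, hGε, fun a ha b hb hab => hFinj ha.1 hb.1 (by rw [← hGF a, ← hGF b, hab]),
    fun q hq => (hGinj q hq.2).injOn, fun q hq => ?_⟩
  rw [LinearMap.finrank_range_of_inj (hGinj q hq.2), Module.finrank_fin_fun]

/-- For `N ⊆ ℂⁿ` of codimension `2ℓ` or `2ℓ+1` and an equidimensional map `F`, the CR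
singularities of `(F ⊕ 0)(N) ⊆ ℂⁿ × ℂˡ` can be perturbed away. -/
theorem perturb_away_after_adding_dimensions {n k ℓ : ℕ} (hℓ : 1 ≤ ℓ)
    (hk : k = 2 * ℓ ∨ k = 2 * ℓ + 1)
    (U : Set (Fin n → ℂ)) (hU : IsOpen U)
    (ρ : Fin k → (Fin n → ℂ) → ℝ)
    (hρa : ∀ j, AnalyticOn ℝ (ρ j) U)
    (hind : ∀ p ∈ U, LinearIndependent ℂ (fun j => wirt (ρ j) p))
    (N : Set (Fin n → ℂ)) (hN : N = {z | z ∈ U ∧ ∀ j, ρ j z = 0})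
    (hNconn : IsConnected N)
    (F : (Fin n → ℂ) → (Fin n → ℂ)) (hF : DifferentiableOn ℂ F U)
    (hFinj : Set.InjOn F N)
    (hFdinj : ∀ q ∈ N, Set.InjOn (fderiv ℂ F q) (tSub ρ q : Set (Fin n → ℂ)))
    (hgen : ∀ z ∈ U, z ∈ closure {w | w ∈ U ∧
      Module.finrank ℂ (LinearMap.range ((fderiv ℂ F w).toLinearMap)) = n}) :
    ∀ p ∈ N, ∃ W : Set (Fin n → ℂ), IsOpen W ∧ p ∈ W ∧ W ⊆ U ∧
      ∀ ε > (0 : ℝ), ∃ G : (Fin n → ℂ) → (Fin n → ℂ) × (Fin ℓ → ℂ),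
        DifferentiableOn ℂ G W ∧
        (∀ z ∈ W, ‖G z - (F z, (0 : Fin ℓ → ℂ))‖ < ε) ∧
        Set.InjOn G (N ∩ W) ∧
        (∀ q ∈ N ∩ W, Set.InjOn (fderiv ℂ G q) (tSub ρ q : Set (Fin n → ℂ))) ∧
        (∀ q ∈ N ∩ W,
          Module.finrank ℂ (LinearMap.range ((fderiv ℂ G q).toLinearMap)) = n) :=
  perturb_away_after_adding_dimensions_general hk U hU ρ N hN F hF hFinj hFdinj
end
end

section
/- Let N = {z ∈ ℂ³ : z₁ = conj(z₃)} and define F : ℂ³ → ℂ⁴ by F(z₁, z₂, z₃) = (z₁, z₂, z₃², z₂·z₃). Then for every open neighborhood U of 0 in ℂ³ there exists ε > 0 such that for every holomorphic map G : U → ℂ⁴ with ‖F(z) − G(z)‖ < ε for all z ∈ U, there exists a point q ∈ N ∩ U at which the complex derivative DG(q) has rank strictly less than 3. (Consequently, the CR singularity of the CR image F(N) at 0 cannot be perturbed away.) -/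
/-!
Parametrize pairs (point of `N`, direction) by `x = (b, c, a, w) ∈ ℂ⁴`, via the point
`(w̄, a, w) ∈ N` and the direction `(b, c, 1)`. For the model map `F`,
`DF(w̄, a, w)(b, c, 1) = (b, c, 2w, a + wc)`, a linear isomorphism `L x = (b, c, 2w, a)` plus a
quadratic term. If `G` is `ε`-close to `F` on a ball of radius `R`, the Cauchy estimates make
`DG - DF` of size `ε / R` and Lipschitz with constant `ε / R²` on a smaller ball, so
`x ↦ DG(w̄, a, w)(b, c, 1)` still approximates `L` on a ball in `ℂ⁴` and, by the quantitative
inverse function theorem, vanishes somewhere on it: the nonzero direction `(b, c, 1)` then lies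
in the kernel of `DG(w̄, a, w)`.
-/

open Metric
open scoped ComplexConjugate NNReal

noncomputable section

local notation "ℂ³" => Fin 3 → ℂ
local notation "ℂ⁴" => Fin 4 → ℂ

section CauchyEstimates

variable {E F : Type*} [NormedAddCommGroup E] [NormedSpace ℂ E]
  [NormedAddCommGroup F] [NormedSpace ℂ F] {f : E → F} {c : E} {r M : ℝ}

theorem norm_fderiv_le_of_forall_mem_ball_norm_le (hf : DifferentiableOn ℂ f (ball c r))
    (hM : ∀ w ∈ ball c r, ‖f w‖ ≤ M) (hr : 0 < r) : ‖fderiv ℂ f c‖ ≤ 2 * M / r := by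
  refine Complex.norm_fderiv_le_div_of_mapsTo_ball hf (fun w hw => ?_) hr
  rw [mem_closedBall, dist_eq_norm]
  linarith [norm_sub_le (f w) (f c), hM w hw, hM c (mem_ball_self hr)]

theorem norm_fderiv_le_of_mem_half_ball (hf : DifferentiableOn ℂ f (ball c r))
    (hM : ∀ w ∈ ball c r, ‖f w‖ ≤ M) {z : E} (hz : z ∈ ball c (r / 2)) :
    ‖fderiv ℂ f z‖ ≤ 4 * M / r := by
  have hsub : ball z (r / 2) ⊆ ball c r := ball_subset_ball' (by linarith [mem_ball.1 hz])
  calc ‖fderiv ℂ f z‖ ≤ 2 * M / (r / 2) :=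
        norm_fderiv_le_of_forall_mem_ball_norm_le (hf.mono hsub) (fun w hw => hM w (hsub hw))
          (pos_of_mem_ball hz)
    _ = 4 * M / r := by ring

theorem norm_fderiv_sub_fderiv_le_of_mem_quarter_ball (hf : DifferentiableOn ℂ f (ball c r))
    (hM : ∀ w ∈ ball c r, ‖f w‖ ≤ M) {z z' : E} (hz : z ∈ ball c (r / 4))
    (hz' : z' ∈ ball c (r / 4)) :
    ‖fderiv ℂ f z - fderiv ℂ f z'‖ ≤ 32 * M / r ^ 2 * ‖z - z'‖ := by
  have hr : 0 < r / 4 := pos_of_mem_ball hz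
  have hfd : ∀ w ∈ ball c (r / 2), DifferentiableAt ℂ f w := fun w hw =>
    hf.differentiableAt (isOpen_ball.mem_nhds (ball_subset_ball (by linarith) hw))
  have hlip : ∀ w ∈ ball c (r / 2), ∀ w' ∈ ball c (r / 2),
      ‖f w - f w'‖ ≤ 4 * M / r * ‖w - w'‖ :=
    fun w hw w' hw' => (convex_ball c (r / 2)).norm_image_sub_le_of_norm_fderiv_le hfd
      (fun x hx => norm_fderiv_le_of_mem_half_ball hf hM hx) hw' hw
  -- The difference of `f` and its translate by `z' - z` is small on `ball z (r / 4)`.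
  set g : E → F := fun w => f w - f (w + (z' - z))
  have hmem : ∀ w ∈ ball z (r / 4), w ∈ ball c (r / 2) ∧ w + (z' - z) ∈ ball c (r / 2) := by
    intro w hw
    rw [mem_ball_iff_norm] at hw hz hz'
    rw [mem_ball_iff_norm, mem_ball_iff_norm]
    refine ⟨by linarith [norm_sub_le_norm_sub_add_norm_sub w z c], ?_⟩
    rw [show w + (z' - z) - c = (w - z) + (z' - c) by abel]
    linarith [norm_add_le (w - z) (z' - c)]
  have hgd : ∀ w ∈ ball z (r / 4),
      HasFDerivAt g (fderiv ℂ f w - fderiv ℂ f (w + (z' - z))) w :=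
    fun w hw => (hfd w (hmem w hw).1).hasFDerivAt.sub
      ((hasFDerivAt_comp_add_right (z' - z)).2 (hfd _ (hmem w hw).2).hasFDerivAt)
  have hgM : ∀ w ∈ ball z (r / 4), ‖g w‖ ≤ 4 * M / r * ‖z - z'‖ := fun w hw => by
    simpa using hlip w (hmem w hw).1 _ (hmem w hw).2
  calc ‖fderiv ℂ f z - fderiv ℂ f z'‖ = ‖fderiv ℂ g z‖ := by
        rw [(hgd z (mem_ball_self hr)).fderiv, add_sub_cancel]
    _ ≤ 2 * (4 * M / r * ‖z - z'‖) / (r / 4) := norm_fderiv_le_of_forall_mem_ball_norm_le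
        (fun w hw => (hgd w hw).differentiableAt.differentiableWithinAt) hgM hr
    _ = 32 * M / r ^ 2 * ‖z - z'‖ := by field_simp; ring

end CauchyEstimates

theorem ContinuousLinearMap.norm_apply_sub_apply_le {𝕜 E F : Type*} [NontriviallyNormedField 𝕜]
    [SeminormedAddCommGroup E] [NormedSpace 𝕜 E] [SeminormedAddCommGroup F] [NormedSpace 𝕜 F]
    (f g : E →L[𝕜] F) (u w : E) : ‖f u - g w‖ ≤ ‖f - g‖ * ‖u‖ + ‖g‖ * ‖u - w‖ :=
  calc ‖f u - g w‖ = ‖(f - g) u + g (u - w)‖ := by simp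
    _ ≤ ‖f - g‖ * ‖u‖ + ‖g‖ * ‖u - w‖ := norm_add_le_of_le (le_opNorm _ _) (le_opNorm _ _)

theorem LinearMap.finrank_range_lt_of_apply_eq_zero {K V W : Type*} [DivisionRing K]
    [AddCommGroup V] [Module K V] [AddCommGroup W] [Module K W] [FiniteDimensional K V]
    (f : V →ₗ[K] W) {v : V} (hv : v ≠ 0) (hfv : f v = 0) :
    Module.finrank K (LinearMap.range f) < Module.finrank K V := by
  have hker : 0 < Module.finrank K (LinearMap.ker f) :=
    Module.finrank_pos_iff_exists_ne_zero.2 ⟨⟨v, hfv⟩, fun h => hv (congrArg Subtype.val h)⟩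
  have := f.finrank_range_add_finrank_ker
  omega

def modelMap (z : ℂ³) : ℂ⁴ := ![z 0, z 1, z 2 ^ 2, z 1 * z 2]

theorem differentiable_modelMap : Differentiable ℂ modelMap :=
  differentiable_pi.2 fun i => by fin_cases i <;> simp [modelMap] <;> fun_prop

theorem fderiv_modelMap_apply (z v : ℂ³) :
    fderiv ℂ modelMap z v = ![v 0, v 1, 2 * z 2 * v 2, z 1 * v 2 + z 2 * v 1] := by
  ext i
  have h := congrArg (· v) (fderiv_apply (differentiable_modelMap z) i)
  simp only [ContinuousLinearMap.comp_apply, ContinuousLinearMap.proj_apply] at h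
  rw [← h]
  fin_cases i <;> simp [modelMap, fderiv_fun_mul, fderiv_fun_pow, differentiableAt_apply,
    fun i : Fin 3 => (hasFDerivAt_apply (𝕜 := ℂ) i z).fderiv]

def paramPoint (x : ℂ⁴) : ℂ³ := ![conj (x 3), x 2, x 3]

def paramDir (x : ℂ⁴) : ℂ³ := ![x 0, x 1, 1]

def paramLinear : ℂ⁴ →L[ℂ] ℂ⁴ :=
  ContinuousLinearMap.pi ![.proj 0, .proj 1, (2 : ℂ) • .proj 3, .proj 2]

@[simp]
theorem paramLinear_apply (x : ℂ⁴) : paramLinear x = ![x 0, x 1, 2 * x 3, x 2] := by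
  ext i; fin_cases i <;> simp [paramLinear]

def paramLinearRightInverse : paramLinear.NonlinearRightInverse where
  toFun y := ![y 0, y 1, y 3, y 2 / 2]
  nnnorm := 1
  bound' y := by
    simp only [NNReal.coe_one, one_mul]
    refine (pi_norm_le_iff_of_nonneg (norm_nonneg y)).2 fun i => ?_
    fin_cases i <;> simp [norm_le_pi_norm]
    exact (div_le_self (norm_nonneg _) one_le_two).trans (norm_le_pi_norm y 2)
  right_inv' y := by
    ext i; fin_cases i <;> simp [mul_div_cancel₀]

theorem paramPoint_sub (x y : ℂ⁴) : paramPoint x - paramPoint y = paramPoint (x - y) := by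
  ext i; fin_cases i <;> simp [paramPoint]

theorem norm_paramPoint_le (x : ℂ⁴) : ‖paramPoint x‖ ≤ ‖x‖ :=
  (pi_norm_le_iff_of_nonneg (norm_nonneg x)).2 fun i => by
    fin_cases i <;> simp [paramPoint, norm_le_pi_norm]

theorem norm_paramDir_le {x : ℂ⁴} (hx : ‖x‖ ≤ 1) : ‖paramDir x‖ ≤ 1 :=
  (pi_norm_le_iff_of_nonneg zero_le_one).2 fun i => by
    fin_cases i <;> simp [paramDir, (norm_le_pi_norm x _).trans hx]

theorem norm_paramDir_sub_le (x y : ℂ⁴) : ‖paramDir x - paramDir y‖ ≤ ‖x - y‖ :=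
  (pi_norm_le_iff_of_nonneg (norm_nonneg _)).2 fun i => by
    fin_cases i
    · simpa [paramDir] using norm_le_pi_norm (x - y) 0
    · simpa [paramDir] using norm_le_pi_norm (x - y) 1
    · simp [paramDir]

theorem paramDir_ne_zero (x : ℂ⁴) : paramDir x ≠ 0 :=
  fun h => by simpa [paramDir] using congrFun h 2

def paramQuad (x : ℂ⁴) : ℂ⁴ := Pi.single 3 (x 3 * x 1)

theorem fderiv_modelMap_paramPoint_paramDir (x : ℂ⁴) :
    fderiv ℂ modelMap (paramPoint x) (paramDir x) = paramLinear x + paramQuad x := by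
  rw [fderiv_modelMap_apply]
  ext i; fin_cases i <;> simp [paramPoint, paramDir, paramQuad]

theorem norm_paramQuad_sub_le {x y : ℂ⁴} {ρ : ℝ} (hx : ‖x‖ ≤ ρ) (hy : ‖y‖ ≤ ρ) :
    ‖paramQuad x - paramQuad y‖ ≤ 2 * ρ * ‖x - y‖ := by
  rw [paramQuad, paramQuad, ← Pi.single_sub, Pi.norm_single]
  calc ‖x 3 * x 1 - y 3 * y 1‖ = ‖x 3 * (x - y) 1 + (x - y) 3 * y 1‖ := by
        simp only [Pi.sub_apply]; ring_nf
    _ ≤ ‖x 3‖ * ‖(x - y) 1‖ + ‖(x - y) 3‖ * ‖y 1‖ :=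
        norm_add_le_of_le (norm_mul_le _ _) (norm_mul_le _ _)
    _ ≤ ρ * ‖x - y‖ + ‖x - y‖ * ρ := add_le_add
        (mul_le_mul ((norm_le_pi_norm x 3).trans hx) (norm_le_pi_norm _ 1) (norm_nonneg _)
          ((norm_nonneg x).trans hx))
        (mul_le_mul (norm_le_pi_norm _ 3) ((norm_le_pi_norm y 1).trans hy) (norm_nonneg _)
          (norm_nonneg _))
    _ = 2 * ρ * ‖x - y‖ := by ring

theorem approximatesLinearOn_paramLinear {D : ℂ³ → ℂ³ →L[ℂ] ℂ⁴} {ρ A B : ℝ} {c : ℝ≥0}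
    (hρ : ρ ≤ 1) (hB : ∀ x ∈ closedBall (0 : ℂ⁴) ρ, ‖D (paramPoint x)‖ ≤ B)
    (hA : ∀ x ∈ closedBall (0 : ℂ⁴) ρ, ∀ y ∈ closedBall (0 : ℂ⁴) ρ,
      ‖D (paramPoint x) - D (paramPoint y)‖ ≤ A * ‖x - y‖)
    (hc : A + B + 2 * ρ ≤ c) :
    ApproximatesLinearOn
      (fun x => (D (paramPoint x) + fderiv ℂ modelMap (paramPoint x)) (paramDir x))
      paramLinear (closedBall 0 ρ) c := by
  intro x hx y hy
  have hx' : ‖x‖ ≤ ρ := mem_closedBall_zero_iff.1 hx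
  have hD : ‖D (paramPoint x) (paramDir x) - D (paramPoint y) (paramDir y)‖
      ≤ (A + B) * ‖x - y‖ :=
    calc _ ≤ ‖D (paramPoint x) - D (paramPoint y)‖ * ‖paramDir x‖
            + ‖D (paramPoint y)‖ * ‖paramDir x - paramDir y‖ :=
          ContinuousLinearMap.norm_apply_sub_apply_le _ _ _ _
      _ ≤ A * ‖x - y‖ * 1 + B * ‖x - y‖ := add_le_add
          (mul_le_mul (hA x hx y hy) (norm_paramDir_le (hx'.trans hρ)) (norm_nonneg _)
            ((norm_nonneg _).trans (hA x hx y hy)))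
          (mul_le_mul (hB y hy) (norm_paramDir_sub_le x y) (norm_nonneg _)
            ((norm_nonneg _).trans (hB y hy)))
      _ = (A + B) * ‖x - y‖ := by ring
  have hdecomp : ∀ x, (D (paramPoint x) + fderiv ℂ modelMap (paramPoint x)) (paramDir x)
      - paramLinear x = D (paramPoint x) (paramDir x) + paramQuad x := fun x => by
    rw [add_apply, fderiv_modelMap_paramPoint_paramDir]; abel
  dsimp only
  calc _ = ‖((D (paramPoint x) + fderiv ℂ modelMap (paramPoint x)) (paramDir x) - paramLinear x)
          - ((D (paramPoint y) + fderiv ℂ modelMap (paramPoint y)) (paramDir y)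
            - paramLinear y)‖ := by rw [map_sub]; congr 1; abel
    _ = ‖(D (paramPoint x) (paramDir x) - D (paramPoint y) (paramDir y))
          + (paramQuad x - paramQuad y)‖ := by rw [hdecomp, hdecomp]; congr 1; abel
    _ ≤ (A + B) * ‖x - y‖ + 2 * ρ * ‖x - y‖ :=
        norm_add_le_of_le hD (norm_paramQuad_sub_le hx' (mem_closedBall_zero_iff.1 hy))
    _ ≤ c * ‖x - y‖ := by rw [← add_mul]; gcongr

theorem approximatesLinearOn_paramLinear_of_norm_le {H : ℂ³ → ℂ⁴} {R : ℝ} (hR : 0 < R)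
    (hR1 : R ≤ 1) (hH : DifferentiableOn ℂ H (ball 0 R))
    (hHR : ∀ z ∈ ball 0 R, ‖H z‖ ≤ R ^ 2 / 144) :
    ApproximatesLinearOn
      (fun x => (fderiv ℂ H (paramPoint x) + fderiv ℂ modelMap (paramPoint x)) (paramDir x))
      paramLinear (closedBall 0 (R / 8)) (1 / 2) := by
  have hp : ∀ x ∈ closedBall (0 : ℂ⁴) (R / 8), paramPoint x ∈ ball (0 : ℂ³) (R / 4) :=
    fun x hx => mem_ball_zero_iff.2 <|
      (norm_paramPoint_le x).trans_lt (by linarith [mem_closedBall_zero_iff.1 hx])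
  refine approximatesLinearOn_paramLinear (A := 2 / 9) (B := R / 36) (by linarith)
    (fun x hx => ?_) (fun x hx y hy => ?_) (by push_cast; linarith)
  · calc _ ≤ 4 * (R ^ 2 / 144) / R :=
          norm_fderiv_le_of_mem_half_ball hH hHR (ball_subset_ball (by linarith) (hp x hx))
      _ = R / 36 := by field_simp; ring
  · calc _ ≤ 32 * (R ^ 2 / 144) / R ^ 2 * ‖paramPoint (x - y)‖ := by
          rw [← paramPoint_sub]
          exact norm_fderiv_sub_fderiv_le_of_mem_quarter_ball hH hHR (hp x hx) (hp y hy)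
      _ ≤ 2 / 9 * ‖x - y‖ := by
          rw [show 32 * (R ^ 2 / 144) / R ^ 2 = 2 / 9 by field_simp; ring]
          exact mul_le_mul_of_nonneg_left (norm_paramPoint_le _) (by norm_num)

theorem exists_fderiv_paramPoint_paramDir_eq_zero {G : ℂ³ → ℂ⁴} {R : ℝ} (hR : 0 < R)
    (hR1 : R ≤ 1) (hG : DifferentiableOn ℂ G (ball 0 R))
    (hGF : ∀ z ∈ ball 0 R, ‖modelMap z - G z‖ ≤ R ^ 2 / 144) :
    ∃ x ∈ closedBall (0 : ℂ⁴) (R / 8), fderiv ℂ G (paramPoint x) (paramDir x) = 0 := by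
  set H : ℂ³ → ℂ⁴ := fun z => G z - modelMap z
  have hH : DifferentiableOn ℂ H (ball 0 R) := hG.sub differentiable_modelMap.differentiableOn
  have hHR : ∀ z ∈ ball 0 R, ‖H z‖ ≤ R ^ 2 / 144 := fun z hz => by
    rw [norm_sub_rev]; exact hGF z hz
  have h0 : (0 : ℂ⁴) ∈ closedBall
      ((fderiv ℂ H (paramPoint 0) + fderiv ℂ modelMap (paramPoint 0)) (paramDir 0))
      (((paramLinearRightInverse.nnnorm : ℝ)⁻¹ - (1 / 2 : ℝ≥0)) * (R / 8)) := by
    rw [mem_closedBall, dist_zero_left, add_apply, fderiv_modelMap_paramPoint_paramDir]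
    simp only [paramLinearRightInverse, paramQuad, map_zero, Pi.zero_apply, mul_zero,
      Pi.single_zero, add_zero, NNReal.coe_one, inv_one]
    have hH0 : ‖fderiv ℂ H (paramPoint 0)‖ ≤ 4 * (R ^ 2 / 144) / R :=
      norm_fderiv_le_of_mem_half_ball hH hHR <| mem_ball_zero_iff.2 <|
        (norm_paramPoint_le 0).trans_lt (by simpa using half_pos hR)
    calc _ ≤ 4 * (R ^ 2 / 144) / R := (ContinuousLinearMap.le_of_opNorm_le _ hH0 _).trans
          (mul_le_of_le_one_right (by positivity) (norm_paramDir_le (by simp)))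
      _ ≤ _ := by field_simp; norm_num
  obtain ⟨x, hx, hx0⟩ := (approximatesLinearOn_paramLinear_of_norm_le hR hR1 hH hHR
    ).surjOn_closedBall_of_nonlinearRightInverse paramLinearRightInverse (by positivity)
      subset_rfl h0
  have hGx : DifferentiableAt ℂ G (paramPoint x) := hG.differentiableAt <| isOpen_ball.mem_nhds <|
    mem_ball_zero_iff.2 <| (norm_paramPoint_le x).trans_lt
      (by linarith [mem_closedBall_zero_iff.1 hx])
  have hHx : fderiv ℂ H (paramPoint x)
      = fderiv ℂ G (paramPoint x) - fderiv ℂ modelMap (paramPoint x) :=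
    fderiv_fun_sub hGx (differentiable_modelMap _)
  dsimp only at hx0
  rw [hHx, sub_add_cancel] at hx0
  exact ⟨x, hx, hx0⟩

/-- For `N = {z₁ = z̄₃} ⊆ ℂ³` and `F(z) = (z₁, z₂, z₃², z₂z₃)`, the CR singularity of
`F(N)` at `0` cannot be perturbed away: every holomorphic map close enough to `F` has
derivative of rank `< 3` somewhere on `N`. -/
theorem example_nonremovable_singularity
    (N : Set (Fin 3 → ℂ)) (hN : N = {z : Fin 3 → ℂ | z 0 = conj (z 2)})
    (F : (Fin 3 → ℂ) → (Fin 4 → ℂ))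
    (hF : ∀ z : Fin 3 → ℂ, F z = ![z 0, z 1, (z 2)^2, z 1 * z 2]) :
    ∀ U : Set (Fin 3 → ℂ), IsOpen U → (0 : Fin 3 → ℂ) ∈ U →
      ∃ ε > (0 : ℝ), ∀ G : (Fin 3 → ℂ) → (Fin 4 → ℂ), DifferentiableOn ℂ G U →
        (∀ z ∈ U, ‖F z - G z‖ < ε) →
        ∃ q ∈ N ∩ U,
          Module.finrank ℂ (LinearMap.range ((fderiv ℂ G q).toLinearMap)) < 3 := by
  obtain rfl : F = modelMap := funext hF
  subst hN
  intro U hU hU0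
  obtain ⟨r, hr, hrU⟩ := Metric.isOpen_iff.1 hU 0 hU0
  set R := min r 1
  have hRU : ball 0 R ⊆ U := (ball_subset_ball (min_le_left r 1)).trans hrU
  have hR : 0 < R := lt_min hr one_pos
  refine ⟨R ^ 2 / 144, by positivity, fun G hG hGF => ?_⟩
  obtain ⟨x, hx, hx0⟩ := exists_fderiv_paramPoint_paramDir_eq_zero hR (min_le_right r 1)
    (hG.mono hRU) fun z hz => (hGF z (hRU hz)).le
  have hxR : paramPoint x ∈ ball 0 R := mem_ball_zero_iff.2 <|
    (norm_paramPoint_le x).trans_lt (by linarith [mem_closedBall_zero_iff.1 hx])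
  refine ⟨paramPoint x, ⟨by simp [paramPoint], hRU hxR⟩, ?_⟩
  simpa using (fderiv ℂ G (paramPoint x)).toLinearMap.finrank_range_lt_of_apply_eq_zero
    (paramDir_ne_zero x) hx0
end
end

section
/- Let M₁ = {(z₁, z₂, w) ∈ ℂ³ : w = conj(z₁)·z₂} and M₂ = {(z₁, z₂, w) ∈ ℂ³ : w = conj(z₁)·z₂ + conj(z₁)³}. Then there is no holomorphic map H defined on an open neighborhood Ω of 0 in ℂ³ with values in ℂ³ such that H(0) = 0, the complex derivative DH(0) is invertible, and H(M₂ ∩ Ω) ⊆ M₁. In particular, M₂ is not locally biholomorphically equivalent to M₁ at 0 (even though both have the same quadratic part conj(z₁)·z₂). -/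
open Complex Filter Topology Metric
open scoped ComplexConjugate

/-! Write `H = (f, g, h)`; then `h = f̄ g` on `M₂ ∩ Ω`, and we show that the last row of `DH(0)`
vanishes. On the line `(0, s, 0) ⊂ M₂` the right-hand side is `o(s)`. On the slice
`(z, 0, z̄³) ⊂ M₂`, replacing `z̄` by an independent variable `ζ` turns the relation into an
identity between holomorphic functions of `(z, ζ)` which holds on the totally real plane `ζ = z̄`,
hence identically near `0`. At `ζ = 0` it gives `h(z, 0, 0) = o(z)`, and at `z = 0` it gives
`h(0, 0, ζ³) = o(ζ³)`: the cubic term of `M₂` is seen only after complexification. -/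

theorem LinearMap.not_surjective_of_apply_single_eq_zero {R ι κ : Type*} [CommSemiring R]
    [Nontrivial R] [Fintype ι] [DecidableEq ι] (L : (ι → R) →ₗ[R] κ → R) (i : κ)
    (h : ∀ j, L (Pi.single j 1) i = 0) : ¬ Function.Surjective L := by
  intro hL
  obtain ⟨w, hw⟩ := hL 1
  have hwi : L w i = 0 := by
    rw [pi_eq_sum_univ' w]
    simp [h]
  simp [hw] at hwi

theorem HasDerivAt.eq_zero_of_eventually_comp_eq_mul {𝕜 : Type*} [NontriviallyNormedField 𝕜]
    {f g a φ : 𝕜 → 𝕜} {f' : 𝕜} (hf : HasDerivAt f f' 0) (hf0 : f 0 = 0)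
    (hg : DifferentiableAt 𝕜 g 0) (hg0 : g 0 = 0) (hφ : Tendsto φ (𝓝[≠] 0) (𝓝[≠] 0))
    (ha : Tendsto a (𝓝[≠] 0) (𝓝 0)) (hfg : ∀ᶠ ζ in 𝓝[≠] 0, f (φ ζ) = a ζ * g (φ ζ)) :
    f' = 0 := by
  have hf_slope := (hasDerivAt_iff_tendsto_slope.1 hf).comp hφ
  have hg_slope := (hasDerivAt_iff_tendsto_slope.1 hg.hasDerivAt).comp hφ
  have hslope : ∀ᶠ ζ in 𝓝[≠] 0, slope f 0 (φ ζ) = a ζ * slope g 0 (φ ζ) := by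
    filter_upwards [hfg] with ζ hζ
    simp only [slope_def_field, hf0, hg0, sub_zero, hζ]
    ring
  simpa using tendsto_nhds_unique (hf_slope.congr' hslope) (ha.mul hg_slope)

theorem fderiv_apply_eq_zero_of_eventually_eq_mul {𝕜 E ι : Type*} [NontriviallyNormedField 𝕜]
    [NormedAddCommGroup E] [NormedSpace 𝕜 E] [Fintype ι] {H : E → ι → 𝕜}
    (hH : DifferentiableAt 𝕜 H 0) (hH0 : H 0 = 0) (b : E) {i j : ι} {a φ : 𝕜 → 𝕜}
    (hφ : Tendsto φ (𝓝[≠] 0) (𝓝[≠] 0)) (ha : Tendsto a (𝓝[≠] 0) (𝓝 0))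
    (hrel : ∀ᶠ ζ in 𝓝[≠] 0, H (φ ζ • b) i = a ζ * H (φ ζ • b) j) :
    fderiv 𝕜 H 0 b i = 0 := by
  have hline : HasDerivAt (fun s : 𝕜 => H (s • b)) (fderiv 𝕜 H 0 b) 0 := by
    have := hH.hasFDerivAt.comp_hasDerivAt_of_eq 0 ((hasDerivAt_id 0).smul_const b) (by simp)
    simpa [Function.comp_def] using this
  refine HasDerivAt.eq_zero_of_eventually_comp_eq_mul (hasDerivAt_pi.1 hline i) (by simp [hH0])
    (differentiableAt_pi.1 hline.differentiableAt j) (by simp [hH0]) hφ ha hrel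

theorem Complex.eqOn_zero_of_forall_ofReal {g : ℂ → ℂ} {r : ℝ} (hr : 0 < r)
    (hg : DifferentiableOn ℂ g (ball 0 r)) (h : ∀ t : ℝ, |t| < r → g t = 0) :
    Set.EqOn g 0 (ball 0 r) := by
  have hofReal : Tendsto ((↑) : ℝ → ℂ) (𝓝[≠] 0) (𝓝[≠] 0) :=
    tendsto_nhdsWithin_iff.2 ⟨(continuous_ofReal.tendsto' 0 0 ofReal_zero).mono_left
      nhdsWithin_le_nhds, eventually_nhdsWithin_of_forall fun t ht => ofReal_ne_zero.2 ht⟩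
  have hreal : ∀ᶠ t : ℝ in 𝓝[≠] 0, g t = 0 :=
    eventually_nhdsWithin_of_eventually_nhds <|
      (eventually_abs_sub_lt 0 hr).mono fun t ht => h t (by simpa using ht)
  exact (hg.analyticOnNhd isOpen_ball).eqOn_zero_of_preconnected_of_frequently_eq_zero
    (convex_ball 0 r).isPreconnected (mem_ball_self hr) (hofReal.frequently hreal.frequently)

theorem Complex.eqOn_zero_of_forall_ofReal_prod {Ψ : ℂ × ℂ → ℂ} {r : ℝ} (hr : 0 < r)
    (hΨ : DifferentiableOn ℂ Ψ (ball 0 r)) (h : ∀ t s : ℝ, |t| < r → |s| < r → Ψ (t, s) = 0) :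
    Set.EqOn Ψ 0 (ball 0 r) := by
  have mem_ball_prod : ∀ u v : ℂ, (u, v) ∈ ball (0 : ℂ × ℂ) r ↔ u ∈ ball 0 r ∧ v ∈ ball 0 r := by
    simp [Prod.norm_def]
  have hslice₂ : ∀ u ∈ ball (0 : ℂ) r, DifferentiableOn ℂ (fun v => Ψ (u, v)) (ball 0 r) :=
    fun u hu => hΨ.comp (by fun_prop) fun v hv => (mem_ball_prod u v).2 ⟨hu, hv⟩
  have hslice₁ : ∀ v ∈ ball (0 : ℂ) r, DifferentiableOn ℂ (fun u => Ψ (u, v)) (ball 0 r) :=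
    fun v hv => hΨ.comp (by fun_prop) fun u hu => (mem_ball_prod u v).2 ⟨hu, hv⟩
  have hreal_left : ∀ t : ℝ, |t| < r → ∀ v ∈ ball (0 : ℂ) r, Ψ (t, v) = 0 := fun t ht =>
    eqOn_zero_of_forall_ofReal hr (hslice₂ t (by simpa using ht)) fun s hs => h t s ht hs
  rintro ⟨u, v⟩ huv
  obtain ⟨hu, hv⟩ := (mem_ball_prod u v).1 huv
  exact eqOn_zero_of_forall_ofReal hr (hslice₁ v hv) (fun t ht => hreal_left t ht v hv) hu

theorem Complex.eventually_eq_zero_of_eventually_apply_conj {Φ : ℂ × ℂ → ℂ}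
    (hΦ : ∀ᶠ q in 𝓝 0, DifferentiableAt ℂ Φ q) (h : ∀ᶠ z in 𝓝 0, Φ (z, conj z) = 0) :
    ∀ᶠ q in 𝓝 0, Φ q = 0 := by
  -- `T` carries the real plane `ℝ × ℝ ⊂ ℂ × ℂ` onto the totally real plane `{(z, z̄)}`.
  let T : ℂ × ℂ → ℂ × ℂ := fun p => ((p.1 + I * p.2) / 2, (p.1 - I * p.2) / 2)
  let S : ℂ × ℂ → ℂ × ℂ := fun q => (q.1 + q.2, I * (q.2 - q.1))
  have hTS : ∀ q, T (S q) = q := fun q => Prod.ext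
    (by linear_combination (q.2 - q.1) * I_mul_I / 2)
    (by linear_combination (q.1 - q.2) * I_mul_I / 2)
  have hT_norm : ∀ p, ‖T p‖ ≤ ‖p‖ := fun p => by
    have h₁ : ‖p.1‖ ≤ ‖p‖ := norm_fst_le p
    have h₂ : ‖p.2‖ ≤ ‖p‖ := norm_snd_le p
    have hadd : ‖p.1 + I * p.2‖ ≤ ‖p.1‖ + ‖p.2‖ := by
      simpa using norm_add_le p.1 (I * p.2)
    have hsub : ‖p.1 - I * p.2‖ ≤ ‖p.1‖ + ‖p.2‖ := by
      simpa using norm_sub_le p.1 (I * p.2)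
    refine max_le ?_ ?_ <;> simp only [T, norm_div, RCLike.norm_ofNat] <;> linarith
  have hT_real : ∀ t s : ℝ, T (t, s) = ((T (t, s)).1, conj (T (t, s)).1) := fun t s => by
    simp [T, map_ofNat, sub_eq_add_neg]
  obtain ⟨ε, hε, hdiff⟩ := eventually_nhds_iff_ball.1 hΦ
  obtain ⟨δ, hδ, hconj⟩ := eventually_nhds_iff_ball.1 h
  have hT_ball : ∀ p ∈ ball (0 : ℂ × ℂ) (min ε δ), T p ∈ ball 0 ε ∧ (T p).1 ∈ ball 0 δ :=
    fun p hp => by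
      rw [mem_ball_zero_iff, lt_min_iff] at hp
      refine ⟨mem_ball_zero_iff.2 ((hT_norm p).trans_lt hp.1),
        mem_ball_zero_iff.2 (((norm_fst_le _).trans (hT_norm p)).trans_lt hp.2)⟩
  have hΨ : Set.EqOn (Φ ∘ T) 0 (ball 0 (min ε δ)) := by
    refine eqOn_zero_of_forall_ofReal_prod (lt_min hε hδ)
      (fun p hp => ((hdiff _ (hT_ball p hp).1).comp p (by fun_prop)).differentiableWithinAt)
      fun t s ht hs => ?_
    have hts : ((t : ℂ), (s : ℂ)) ∈ ball (0 : ℂ × ℂ) (min ε δ) := by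
      simp only [mem_ball_zero_iff, Prod.norm_def, norm_real, Real.norm_eq_abs]
      exact max_lt ht hs
    rw [Function.comp_apply, hT_real]
    exact hconj _ (hT_ball _ hts).2
  have hS : Tendsto S (𝓝 0) (𝓝 0) :=
    Continuous.tendsto' (by fun_prop) 0 0 (by simp [S])
  filter_upwards [hS (ball_mem_nhds 0 (lt_min hε hδ))] with q hq
  simpa [hTS] using hΨ hq

section

variable {H : (Fin 3 → ℂ) → Fin 3 → ℂ}

/-- At `q = (z, z̄)` this is the relation `H(M₂) ⊆ M₁` at the point `(z, 0, z̄³)`; the factor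
`q ↦ conj (H (conj q) 0)` is holomorphic. -/
theorem eventually_apply_two_eq_conj_mul_complexified
    (hH : ∀ᶠ v in 𝓝 0, DifferentiableAt ℂ H v)
    (hM : ∀ᶠ v in 𝓝 0, v 2 = conj (v 0) * v 1 + conj (v 0) ^ 3 → H v 2 = conj (H v 0) * H v 1) :
    ∀ᶠ q : ℂ × ℂ in 𝓝 0,
      H ![q.1, 0, q.2 ^ 3] 2 =
        conj (H ![conj q.2, 0, conj q.1 ^ 3] 0) * H ![q.1, 0, q.2 ^ 3] 1 := by
  have hvec : ∀ {f : ℂ × ℂ → Fin 3 → ℂ}, Continuous f → f 0 = 0 →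
      ∀ᶠ q in 𝓝 0, DifferentiableAt ℂ H (f q) := fun hf hf0 =>
    (hf.tendsto' 0 0 hf0).eventually hH
  have hstar : ∀ a b c : ℂ, star ![a, b, c] = ![conj a, conj b, conj c] := fun a b c => by
    funext i; fin_cases i <;> rfl
  refine (Complex.eventually_eq_zero_of_eventually_apply_conj (Φ := fun q =>
    H ![q.1, 0, q.2 ^ 3] 2 - conj (H ![conj q.2, 0, conj q.1 ^ 3] 0) * H ![q.1, 0, q.2 ^ 3] 1)
    ?_ ?_).mono fun q hq => sub_eq_zero.1 hq
  · filter_upwards [hvec (f := fun q => ![q.1, 0, q.2 ^ 3]) (by fun_prop) (by simp),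
      hvec (f := fun q => ![conj q.2, 0, conj q.1 ^ 3]) (by fun_prop) (by simp)]
      with q hq₁ hq₂
    have hstar_H : DifferentiableAt ℂ (star ∘ H ∘ star) ![q.2, 0, q.1 ^ 3] := by
      simpa only [hstar, conj_conj, map_zero, map_pow] using hq₂.star_star
    have hconj :
        DifferentiableAt ℂ (fun q : ℂ × ℂ => conj (H ![conj q.2, 0, conj q.1 ^ 3] 0)) q := by
      have := differentiableAt_pi.1 (hstar_H.comp q (f := fun q : ℂ × ℂ => ![q.2, 0, q.1 ^ 3])
        (by unfold Matrix.vecCons; fun_prop)) 0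
      simpa [Function.comp_def, hstar] using this
    have hslice := differentiableAt_pi.1 (hq₁.comp q (f := fun q : ℂ × ℂ => ![q.1, 0, q.2 ^ 3])
      (by unfold Matrix.vecCons; fun_prop))
    exact (hslice 2).sub (hconj.mul (hslice 1))
  · have hcurve : Tendsto (fun z : ℂ => ![z, 0, conj z ^ 3]) (𝓝 0) (𝓝 0) :=
      Continuous.tendsto' (by fun_prop) 0 0 (by simp)
    filter_upwards [hcurve.eventually hM] with z hz
    simpa [sub_eq_zero] using hz

theorem fderiv_apply_single_two_eq_zero
    (hH : ∀ᶠ v in 𝓝 0, DifferentiableAt ℂ H v) (hH0 : H 0 = 0)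
    (hM : ∀ᶠ v in 𝓝 0, v 2 = conj (v 0) * v 1 + conj (v 0) ^ 3 → H v 2 = conj (H v 0) * H v 1)
    (j : Fin 3) : fderiv ℂ H 0 (Pi.single j 1) 2 = 0 := by
  have hH0' : DifferentiableAt ℂ H 0 := hH.self_of_nhds
  have hconj_H : ∀ {f : ℂ → Fin 3 → ℂ}, Continuous f → f 0 = 0 →
      Tendsto (fun s => conj (H (f s) 0)) (𝓝[≠] 0) (𝓝 0) := fun {f} hf hf0 => by
    have hc : ContinuousAt (fun s => conj (H (f s) 0)) 0 :=
      continuous_conj.continuousAt.comp ((continuous_apply 0).continuousAt.comp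
        ((hf0 ▸ hH0'.continuousAt).comp hf.continuousAt))
    simpa [hf0, hH0] using hc.tendsto.mono_left nhdsWithin_le_nhds
  have hsingle : ∀ s : ℂ, s • Pi.single (0 : Fin 3) 1 = ![s, 0, 0] ∧
      s • Pi.single (1 : Fin 3) 1 = ![0, s, 0] ∧ s • Pi.single (2 : Fin 3) 1 = ![0, 0, s] :=
    fun s => by refine ⟨?_, ?_, ?_⟩ <;> funext i <;> fin_cases i <;> simp
  have hrel := eventually_apply_two_eq_conj_mul_complexified hH hM
  fin_cases j
  · refine fderiv_apply_eq_zero_of_eventually_eq_mul hH0' hH0 _ (j := 1) tendsto_id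
      (hconj_H (f := fun s => ![0, 0, conj s ^ 3]) (by fun_prop) (by simp)) ?_
    have hline : Tendsto (fun s : ℂ => (s, (0 : ℂ))) (𝓝 0) (𝓝 0) :=
      Continuous.tendsto' (by fun_prop) 0 0 rfl
    filter_upwards [(hline.eventually hrel).filter_mono nhdsWithin_le_nhds] with s hs
    simpa [hsingle] using hs
  · refine fderiv_apply_eq_zero_of_eventually_eq_mul hH0' hH0 _ (j := 1) tendsto_id
      (hconj_H (f := fun s => ![0, s, 0]) (by fun_prop) (by simp)) ?_
    have hline : Tendsto (fun s : ℂ => ![0, s, 0]) (𝓝 0) (𝓝 0) :=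
      Continuous.tendsto' (by fun_prop) 0 0 (by simp)
    filter_upwards [(hline.eventually hM).filter_mono nhdsWithin_le_nhds] with s hs
    simpa [hsingle] using hs
  · have hcube : Tendsto (· ^ 3 : ℂ → ℂ) (𝓝[≠] 0) (𝓝[≠] 0) :=
      tendsto_nhdsWithin_iff.2 ⟨((continuous_pow 3).tendsto' 0 0 (zero_pow three_ne_zero)).mono_left
        nhdsWithin_le_nhds, eventually_nhdsWithin_of_forall fun ζ hζ => pow_ne_zero 3 hζ⟩
    refine fderiv_apply_eq_zero_of_eventually_eq_mul hH0' hH0 _ (j := 1) hcube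
      (hconj_H (f := fun ζ => ![conj ζ, 0, 0]) (by fun_prop) (by simp)) ?_
    have hline : Tendsto (fun ζ : ℂ => ((0 : ℂ), ζ)) (𝓝 0) (𝓝 0) :=
      Continuous.tendsto' (by fun_prop) 0 0 rfl
    filter_upwards [(hline.eventually hrel).filter_mono nhdsWithin_le_nhds] with ζ hζ
    simpa [hsingle] using hζ

end

/-- The CR singular submanifolds `M₁ : w = z̄₁z₂` and `M₂ : w = z̄₁z₂ + z̄₁³` in `ℂ³`
are not locally biholomorphically equivalent at `0`: no holomorphic map with `H(0) = 0`
and invertible derivative at `0` takes `M₂` into `M₁`. -/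
theorem higher_order_invariants_example
    (M₁ M₂ : Set (Fin 3 → ℂ))
    (hM₁ : M₁ = {z : Fin 3 → ℂ | z 2 = conj (z 0) * z 1})
    (hM₂ : M₂ = {z : Fin 3 → ℂ | z 2 = conj (z 0) * z 1 + (conj (z 0))^3}) :
    ¬ ∃ (Ω : Set (Fin 3 → ℂ)) (H : (Fin 3 → ℂ) → (Fin 3 → ℂ)),
        IsOpen Ω ∧ (0 : Fin 3 → ℂ) ∈ Ω ∧
        DifferentiableOn ℂ H Ω ∧ H 0 = 0 ∧
        Function.Bijective (fderiv ℂ H 0) ∧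
        H '' (M₂ ∩ Ω) ⊆ M₁ := by
  rintro ⟨Ω, H, hΩ, h0Ω, hH, hH0, hbij, hsub⟩
  have hΩ0 : Ω ∈ 𝓝 0 := hΩ.mem_nhds h0Ω
  have hdiff : ∀ᶠ v in 𝓝 0, DifferentiableAt ℂ H v :=
    eventually_of_mem hΩ0 fun v hv => hH.differentiableAt (hΩ.mem_nhds hv)
  have hrel : ∀ᶠ v in 𝓝 0,
      v 2 = conj (v 0) * v 1 + conj (v 0) ^ 3 → H v 2 = conj (H v 0) * H v 1 :=
    eventually_of_mem hΩ0 fun v hv hv₂ => by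
      simpa [hM₁] using hsub ⟨v, ⟨by simpa [hM₂] using hv₂, hv⟩, rfl⟩
  exact LinearMap.not_surjective_of_apply_single_eq_zero (fderiv ℂ H 0).toLinearMap 2
    (fderiv_apply_single_two_eq_zero hdiff hH0 hrel) hbij.2
end

section
/- Fix an integer k ≥ 0 and define g : ℂ → ℂ by g(ζ) = (k + 3)·conj(ζ)^{k+2}/ζ for ζ ≠ 0 and g(0) = 0. Then g is of class C^k on ℂ (ContDiff ℝ k, viewing ℂ as a real vector space), but there is no open neighborhood of 0 on which g is of class C^{k+1}. (Here g is the quotient ρ_{z̄₂}/ρ_{z̄₁}, as a function of z₂, for the CR singular submanifold M ⊆ ℂ³ given by w = conj(z₁)·z₂ + conj(z₂)^{k+3}, whose Wirtinger derivatives are ρ_{z̄₁} = z₂ and ρ_{z̄₂} = (k+3)·conj(z₂)^{k+2}; hence the extended CR line bundle of this M near 0 is C^k but not C^{k+1}.) -/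
/-!
Write `g = (k + 3) • F` with `F z = z̄ ^ a / z ^ b`, `a = k + 2`, `b = 1`. Away from `0` the map `F`
is smooth, and its real derivative is a combination of maps of the same shape with `a - b` lowered
by one; since `‖F z‖ = ‖z‖ ^ (a - b)`, an induction gives that `F` is `C^(a - b - 1)`.

Conversely `F` is homogeneous of degree `n = a - b` under real dilations, so its `n`-th derivative
is invariant under them; if it were continuous at `0` it would be a constant multilinear map `A`.
Since `F (u z) = F u * F z`, `A (u, …, u) = n! • F u = n! • u ^ (-(a + b))` on the unit circle,
whereas `u ^ n • A (u, …, u)` is the restriction of a polynomial `p` there. Thus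
`X ^ (2 b) * p - n!` has infinitely many roots, which is impossible when `b ≥ 1`.
-/

open Complex Filter Topology Metric
open scoped ComplexConjugate

noncomputable section

section Homogeneous

variable {𝕜 E F G : Type*} [NontriviallyNormedField 𝕜] [NormedAddCommGroup E] [NormedSpace 𝕜 E]
  [NormedAddCommGroup F] [NormedSpace 𝕜 F] [NormedAddCommGroup G] [NormedSpace 𝕜 G]

theorem ContinuousLinearMap.iteratedFDeriv_comp_right_of_isOpen (g : G →L[𝕜] E) {f : E → F}
    {s : Set E} {n : WithTop ℕ∞} (hs : IsOpen s) (hf : ContDiffOn 𝕜 n f s) {x : G}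
    (hx : g x ∈ s) {i : ℕ} (hi : i ≤ n) :
    iteratedFDeriv 𝕜 i (f ∘ g) x =
      (iteratedFDeriv 𝕜 i f (g x)).compContinuousLinearMap fun _ => g := by
  have hs' : IsOpen (g ⁻¹' s) := hs.preimage g.continuous
  have h := g.iteratedFDerivWithin_comp_right hf hs.uniqueDiffOn hs'.uniqueDiffOn hx hi
  rwa [iteratedFDerivWithin_of_isOpen i hs' hx, iteratedFDerivWithin_of_isOpen i hs hx] at h

theorem iteratedFDeriv_apply_map_of_comp_eq {f : E → F} (L : E ≃L[𝕜] E) (M : F ≃L[𝕜] F)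
    (h : f ∘ L = M ∘ f) (n : ℕ) (x : E) (v : Fin n → E) :
    iteratedFDeriv 𝕜 n f (L x) (fun i => L (v i)) = M (iteratedFDeriv 𝕜 n f x v) := by
  have hright : iteratedFDeriv 𝕜 n (f ∘ L) x =
      (iteratedFDeriv 𝕜 n f (L x)).compContinuousLinearMap fun _ => (L : E →L[𝕜] E) := by
    simpa [iteratedFDerivWithin_univ] using
      L.iteratedFDerivWithin_comp_right f uniqueDiffOn_univ (Set.mem_univ (L x)) n
  have := congrArg (fun φ => iteratedFDeriv 𝕜 n φ x v) h
  simpa [hright, M.iteratedFDeriv_comp_left] using this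

theorem iteratedFDeriv_smul_eq_of_homogeneous {f : E → F} {n : ℕ}
    (hf : ∀ (t : 𝕜) (x : E), t ≠ 0 → f (t • x) = t ^ n • f x) {t : 𝕜} (ht : t ≠ 0) (x : E) :
    iteratedFDeriv 𝕜 n f (t • x) = iteratedFDeriv 𝕜 n f x := by
  ext v
  have htn : t ^ n ≠ 0 := pow_ne_zero n ht
  have key := iteratedFDeriv_apply_map_of_comp_eq
    (ContinuousLinearEquiv.smulLeft (R₁ := 𝕜) (Units.mk0 t ht))
    (ContinuousLinearEquiv.smulLeft (R₁ := 𝕜) (Units.mk0 (t ^ n) htn))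
    (funext fun y => hf t y ht) n x v
  simp only [ContinuousLinearEquiv.smulLeft_apply_apply, Units.smul_mk0] at key
  rw [(iteratedFDeriv 𝕜 n f (t • x)).map_smul_univ (fun _ => t), Finset.prod_const,
    Finset.card_univ, Fintype.card_fin] at key
  exact smul_right_injective F htn key

theorem iteratedFDeriv_eq_of_homogeneous_of_continuousAt {f : E → F} {n : ℕ}
    (hf : ∀ (t : 𝕜) (x : E), t ≠ 0 → f (t • x) = t ^ n • f x)
    (hc : ContinuousAt (iteratedFDeriv 𝕜 n f) 0) (x : E) :
    iteratedFDeriv 𝕜 n f x = iteratedFDeriv 𝕜 n f 0 := by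
  have hsmul : Tendsto (fun t : 𝕜 => t • x) (𝓝[≠] 0) (𝓝 0) := by
    simpa using (tendsto_id.smul_const x).mono_left (nhdsWithin_le_nhds (a := (0 : 𝕜)))
  refine tendsto_nhds_unique (tendsto_const_nhds.congr' ?_) (hc.tendsto.comp hsmul)
  filter_upwards [self_mem_nhdsWithin] with t ht
  exact (iteratedFDeriv_smul_eq_of_homogeneous hf ht x).symm

end Homogeneous

theorem MultilinearMap.exists_polynomial_eval_eq_pow_mul_apply_diag :
    ∀ {n : ℕ} (M : MultilinearMap ℝ (fun _ : Fin n => ℂ) ℂ), ∃ p : Polynomial ℂ,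
      ∀ u ∈ sphere (0 : ℂ) 1, p.eval u = u ^ n * M (fun _ => u)
  | 0, M => ⟨Polynomial.C (M 0), fun u _ => by
      simp [Subsingleton.elim (fun _ => u) (0 : Fin 0 → ℂ)]⟩
  | n + 1, M => by
    obtain ⟨p₁, hp₁⟩ := exists_polynomial_eval_eq_pow_mul_apply_diag
      ((LinearMap.applyₗ 1).compMultilinearMap M.curryRight)
    obtain ⟨p₂, hp₂⟩ := exists_polynomial_eval_eq_pow_mul_apply_diag
      ((LinearMap.applyₗ I).compMultilinearMap M.curryRight)
    -- on the unit circle `u * re u = (u ^ 2 + 1) / 2` and `u * im u = -I * (u ^ 2 - 1) / 2`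
    refine ⟨Polynomial.C (1 / 2) * (Polynomial.X ^ 2 + 1) * p₁
      + Polynomial.C (-I / 2) * (Polynomial.X ^ 2 - 1) * p₂, fun u hu => ?_⟩
    have hu1 : ‖u‖ = 1 := by simpa using hu
    have hconj : conj u * u = 1 := by
      rw [← inv_eq_conj hu1, inv_mul_cancel₀ (norm_ne_zero_iff.1 (by simp [hu1]))]
    have hdiag : (fun _ : Fin (n + 1) => u) = Fin.snoc (fun _ => u) u := by
      funext i; refine Fin.lastCases ?_ (fun j => ?_) i <;> simp
    have hre : (u.re : ℂ) = (u + conj u) / 2 := re_eq_add_conj u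
    have him : (u.im : ℂ) = (u - conj u) * (-I / 2) := by
      rw [im_eq_sub_conj]; field_simp; rw [I_sq]; ring
    have hsplit : M (fun _ => u) =
        u.re * M.curryRight (fun _ => u) 1 + u.im * M.curryRight (fun _ => u) I := by
      have hu_eq : u = u.re • (1 : ℂ) + u.im • I := by simp
      calc M (fun _ => u) = M.curryRight (fun _ => u) u := by rw [M.curryRight_apply, ← hdiag]
        _ = M.curryRight (fun _ => u) (u.re • (1 : ℂ) + u.im • I) := congrArg _ hu_eq
        _ = _ := by rw [map_add, map_smul, map_smul, real_smul, real_smul]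
    simp only [Polynomial.eval_add, Polynomial.eval_mul, Polynomial.eval_C, Polynomial.eval_pow,
      Polynomial.eval_X, Polynomial.eval_one, Polynomial.eval_sub, hp₁ u hu, hp₂ u hu, hsplit,
      LinearMap.compMultilinearMap_apply, LinearMap.applyₗ_apply_apply, hre, him]
    linear_combination (-u ^ n * M.curryRight (fun _ => u) 1 / 2
      - I / 2 * u ^ n * M.curryRight (fun _ => u) I) * hconj

/-- At `z = 0` the convention `x / 0 = 0` gives the value `0`, the continuous extension when
`b < a`. -/
def conjPowDivPow (a b : ℕ) (z : ℂ) : ℂ := conj z ^ a / z ^ b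

namespace conjPowDivPow

variable {a b : ℕ}

theorem apply_zero (ha : a ≠ 0) : conjPowDivPow a b 0 = 0 := by
  simp [conjPowDivPow, ha]

theorem norm_apply (hab : b < a) (z : ℂ) : ‖conjPowDivPow a b z‖ = ‖z‖ ^ (a - b) := by
  rcases eq_or_ne z 0 with rfl | hz
  · simp [apply_zero (by omega : a ≠ 0), Nat.sub_ne_zero_of_lt hab]
  · rw [conjPowDivPow, norm_div, norm_pow, norm_pow, Complex.norm_conj,
      pow_sub₀ _ (norm_ne_zero_iff.2 hz) hab.le, div_eq_mul_inv]

theorem continuous (hab : b < a) : Continuous (conjPowDivPow a b) := by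
  refine continuous_iff_continuousAt.2 fun z => ?_
  rcases eq_or_ne z 0 with rfl | hz
  · rw [ContinuousAt, apply_zero (by omega), tendsto_zero_iff_norm_tendsto_zero]
    simp_rw [norm_apply hab]
    exact (by fun_prop : Continuous fun x : ℂ => ‖x‖ ^ (a - b)).tendsto' 0 0
      (by simp [Nat.sub_ne_zero_of_lt hab])
  · exact ((continuous_conj.pow a).continuousAt).div (continuous_pow b).continuousAt
      (pow_ne_zero _ hz)

theorem hasFDerivAt (hab : b + 2 ≤ a) (z : ℂ) :
    HasFDerivAt (conjPowDivPow a b)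
      ((a * conjPowDivPow (a - 1) b z) • (conjCLE : ℂ →L[ℝ] ℂ)
        - (b * conjPowDivPow a (b + 1) z) • (1 : ℂ →L[ℝ] ℂ)) z := by
  rcases eq_or_ne z 0 with rfl | hz
  · simp only [apply_zero (by omega : a - 1 ≠ 0), apply_zero (by omega : a ≠ 0), mul_zero,
      sub_zero, hasFDerivAt_iff_isLittleO_nhds_zero, zero_add]
    simpa [← Asymptotics.isLittleO_norm_left, norm_apply (by omega : b < a)] using
      Asymptotics.isLittleO_norm_pow_id (E' := ℂ) (by omega : 1 < a - b)
  · have hconj : HasFDerivAt (fun w : ℂ => conj w ^ a)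
        ((a * conj z ^ (a - 1)) • (conjCLE : ℂ →L[ℝ] ℂ)) z :=
      (((hasDerivAt_pow a (conj z)).hasFDerivAt.restrictScalars ℝ).comp z
        conjCLE.hasFDerivAt).congr_fderiv (ContinuousLinearMap.ext fun v => by simp [mul_comm])
    have hinv : HasFDerivAt (fun w : ℂ => (w ^ b)⁻¹)
        ((-(b * z ^ (b - 1)) / (z ^ b) ^ 2) • (1 : ℂ →L[ℝ] ℂ)) z :=
      (((hasDerivAt_pow b z).inv (pow_ne_zero _ hz)).hasFDerivAt.restrictScalars ℝ).congr_fderiv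
        (ContinuousLinearMap.ext fun v => by simp [mul_comm])
    have hfun : conjPowDivPow a b = fun w => conj w ^ a * (w ^ b)⁻¹ :=
      funext fun w => div_eq_mul_inv _ _
    rw [hfun]
    refine (hconj.fun_mul hinv).congr_fderiv (ContinuousLinearMap.ext fun v => ?_)
    rcases b with _ | b
    · simp [conjPowDivPow]
    · simp [conjPowDivPow]
      field_simp
      ring

theorem contDiff {n : ℕ} (h : b + n < a) : ContDiff ℝ n (conjPowDivPow a b) := by
  induction n generalizing a b with
  | zero => exact contDiff_zero.2 (continuous (by omega))
  | succ n ih =>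
    have hfderiv : fderiv ℝ (conjPowDivPow a b) = fun z =>
        (a * conjPowDivPow (a - 1) b z) • (conjCLE : ℂ →L[ℝ] ℂ)
          - (b * conjPowDivPow a (b + 1) z) • (1 : ℂ →L[ℝ] ℂ) :=
      funext fun z => (hasFDerivAt (by omega) z).fderiv
    rw [Nat.cast_succ, contDiff_succ_iff_fderiv]
    refine
      ⟨fun z => (hasFDerivAt (a := a) (b := b) (by omega) z).differentiableAt, by simp, ?_⟩
    rw [hfderiv]
    exact ((contDiff_const.mul (ih (a := a - 1) (b := b) (by omega))).smul contDiff_const).sub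
      ((contDiff_const.mul (ih (a := a) (b := b + 1) (by omega))).smul contDiff_const)

theorem mul_apply (z w : ℂ) :
    conjPowDivPow a b (z * w) = conjPowDivPow a b z * conjPowDivPow a b w := by
  rw [conjPowDivPow, map_mul, mul_pow, mul_pow, ← div_mul_div_comm]; rfl

theorem ofReal_apply (hab : b < a) (t : ℝ) : conjPowDivPow a b t = (t : ℂ) ^ (a - b) := by
  rcases eq_or_ne t 0 with rfl | ht
  · simp [apply_zero (by omega : a ≠ 0), Nat.sub_ne_zero_of_lt hab]
  · rw [conjPowDivPow, conj_ofReal, pow_sub₀ _ (ofReal_ne_zero.2 ht) hab.le, div_eq_mul_inv]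

theorem real_smul_apply (hab : b < a) (t : ℝ) (z : ℂ) :
    conjPowDivPow a b (t • z) = t ^ (a - b) • conjPowDivPow a b z := by
  rw [real_smul, mul_apply, ofReal_apply hab, real_smul, ofReal_pow]

theorem apply_ne_zero {z : ℂ} (hz : z ≠ 0) : conjPowDivPow a b z ≠ 0 :=
  div_ne_zero (pow_ne_zero _ ((map_ne_zero _).2 hz)) (pow_ne_zero _ hz)

theorem contDiffOn_compl_zero : ContDiffOn ℝ ⊤ (conjPowDivPow a b) {0}ᶜ := fun _ hz =>
  ((conjCLE.contDiff.pow a).contDiffAt.mul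
    ((contDiff_id.pow b).contDiffAt.inv (pow_ne_zero b hz))).contDiffWithinAt

theorem iteratedFDeriv_apply_diag {n : ℕ} {u : ℂ} (hu : u ≠ 0) :
    iteratedFDeriv ℝ n (conjPowDivPow a b) u (fun _ => u) =
      conjPowDivPow a b u * iteratedFDeriv ℝ n (conjPowDivPow a b) 1 (fun _ => 1) := by
  simpa using iteratedFDeriv_apply_map_of_comp_eq (f := conjPowDivPow a b)
    (ContinuousLinearEquiv.smulLeft (R₁ := ℝ) (Units.mk0 u hu))
    (ContinuousLinearEquiv.smulLeft (R₁ := ℝ) (Units.mk0 _ (apply_ne_zero (a := a) (b := b) hu)))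
    (funext fun z => by simp [mul_apply]) n 1 (fun _ => 1)

theorem iteratedFDeriv_apply_one (hab : b < a) :
    iteratedFDeriv ℝ (a - b) (conjPowDivPow a b) 1 (fun _ => 1) = (a - b).factorial := by
  have hreal : conjPowDivPow a b ∘ ofRealCLM = ofRealCLM ∘ fun t : ℝ => t ^ (a - b) :=
    funext fun t => by simp [ofReal_apply hab]
  have hright := ofRealCLM.iteratedFDeriv_comp_right_of_isOpen isOpen_compl_singleton
    (contDiffOn_compl_zero (a := a) (b := b)) (x := 1) (by simp) (i := a - b) le_top
  have hleft := ofRealCLM.iteratedFDeriv_comp_left (f := fun t : ℝ => t ^ (a - b))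
    ((contDiff_id.pow (a - b)).contDiffAt (x := 1)) (i := a - b) le_rfl
  have := congrArg (fun φ => φ (fun _ => (1 : ℝ))) (hright.symm.trans (hreal ▸ hleft))
  simp only [Function.comp_apply, ContinuousMultilinearMap.compContinuousLinearMap_apply,
    ContinuousLinearMap.compContinuousMultilinearMap_coe, ofRealCLM_apply, ofReal_one] at this
  rw [this, ← iteratedDeriv_eq_iteratedFDeriv, iteratedDeriv_pow]
  simp [Nat.descFactorial_self]

theorem not_contDiffAt (hb : 0 < b) (hab : b < a) :
    ¬ ContDiffAt ℝ (a - b : ℕ) (conjPowDivPow a b) 0 := by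
  intro h
  set A := iteratedFDeriv ℝ (a - b) (conjPowDivPow a b) 0
  have hconst : ∀ z, iteratedFDeriv ℝ (a - b) (conjPowDivPow a b) z = A :=
    iteratedFDeriv_eq_of_homogeneous_of_continuousAt (fun t z _ => real_smul_apply hab t z)
      (h.continuousAt_iteratedFDeriv le_rfl)
  obtain ⟨p, hp⟩ := A.toMultilinearMap.exists_polynomial_eval_eq_pow_mul_apply_diag
  have hroot : ∀ u ∈ sphere (0 : ℂ) 1,
      (Polynomial.X ^ (2 * b) * p - Polynomial.C ((a - b).factorial : ℂ)).IsRoot u := by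
    intro u hu
    have hu1 : ‖u‖ = 1 := by simpa using hu
    have hu0 : u ≠ 0 := norm_ne_zero_iff.1 (by simp [hu1])
    have hA : A (fun _ => u) = conjPowDivPow a b u * (a - b).factorial := by
      rw [← hconst u, iteratedFDeriv_apply_diag hu0, iteratedFDeriv_apply_one hab]
    simp only [Polynomial.IsRoot, Polynomial.eval_sub, Polynomial.eval_mul, Polynomial.eval_pow,
      Polynomial.eval_X, Polynomial.eval_C, hp u hu, ContinuousMultilinearMap.coe_coe, hA,
      conjPowDivPow, ← inv_eq_conj hu1]
    have hpow : u ^ (2 * b) * u ^ (a - b) = u ^ a * u ^ b := by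
      rw [← pow_add, ← pow_add]; congr 1; omega
    rw [← mul_assoc, ← mul_assoc, hpow, inv_pow]
    field_simp
    ring
  have hinf : (sphere (0 : ℂ) 1).Infinite :=
    (isConnected_sphere (by simp) 0 zero_le_one).isPreconnected.infinite_of_nontrivial
      ⟨1, by simp, -1, by simp, by norm_num⟩
  have hzero := Polynomial.eq_zero_of_infinite_isRoot _ (hinf.mono hroot)
  have := congrArg (Polynomial.eval 0) hzero
  simp [zero_pow (by omega : 2 * b ≠ 0), Nat.factorial_ne_zero] at this

end conjPowDivPow

/-- The function `g(ζ) = (k+3)·ζ̄^{k+2}/ζ`, `g(0) = 0` (the quotient `ρ_{z̄₂}/ρ_{z̄₁}`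
for the submanifold `w = z̄₁z₂ + z̄₂^{k+3}` of `ℂ³`) is `C^k` on `ℂ` but not `C^{k+1}`
on any neighborhood of `0`. -/
theorem quotient_Ck_not_Ck1 (k : ℕ) (g : ℂ → ℂ)
    (hg : ∀ ζ : ℂ, ζ ≠ 0 → g ζ = ((k : ℂ) + 3) * (conj ζ)^(k+2) / ζ)
    (hg0 : g 0 = 0) :
    ContDiff ℝ k g ∧
    ¬ ∃ W : Set ℂ, IsOpen W ∧ (0 : ℂ) ∈ W ∧ ContDiffOn ℝ (k+1) g W := by
  have hk : (k : ℂ) + 3 ≠ 0 := by exact_mod_cast (by omega : k + 3 ≠ 0)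
  have hg' : g = fun z => ((k : ℂ) + 3) * conjPowDivPow (k + 2) 1 z := by
    funext z
    rcases eq_or_ne z 0 with rfl | hz
    · rw [hg0, conjPowDivPow.apply_zero (by omega), mul_zero]
    · rw [hg z hz, conjPowDivPow, pow_one, mul_div_assoc]
  refine ⟨hg' ▸ contDiff_const.mul (conjPowDivPow.contDiff (by omega)), ?_⟩
  rintro ⟨W, hW, hW0, hgW⟩
  have hF : ContDiffAt ℝ (k + 1) (conjPowDivPow (k + 2) 1) 0 := by
    simpa [hg', hk] using
      contDiffAt_const (c := ((k : ℂ) + 3)⁻¹).mul (hgW.contDiffAt (hW.mem_nhds hW0))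
  exact conjPowDivPow.not_contDiffAt (a := k + 2) one_pos (by omega) (by simpa using hF)
end
end
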